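/- arXiv:2510.04799 — 7 statements merged into one kernel-verified Lean document; each statement's English description precedes it below -/
import Mathlib

section
/- Let a and b be positive integers with a | b, and let y1, y2, y3, x be positive integers with y3 | y2 | x and x·y3 = y1·y2. Then x^a + y3^a - y1^a - y2^a divides x^b + y3^b - y1^b - y2^b. -/
theorem stmt_1 (a b x y1 y2 y3 : ℕ) (ha : 0 < a) (hb : 0 < b) (hab : a ∣ b)
    (hx : 0 < x) (hy1 : 0 < y1) (hy2 : 0 < y2) (hy3 : 0 < y3)
    (h32 : y3 ∣ y2) (h2x : y2 ∣ x) (hmul : x * y3 = y1 * y2) :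
    ((x : ℤ) ^ a + y3 ^ a - y1 ^ a - y2 ^ a) ∣
      ((x : ℤ) ^ b + y3 ^ b - y1 ^ b - y2 ^ b) := by
  obtain ⟨k, rfl⟩ := h2x
  have hk : y1 = k * y3 := by
    have := hmul
    have h2 : (y2 : ℤ) ≠ 0 := by exact_mod_cast hy2.ne'
    nlinarith [Nat.eq_of_mul_eq_mul_left hy2 (by linarith [hmul] : y2 * y1 = y2 * (k * y3))]
  subst hk
  obtain ⟨m, rfl⟩ := hab
  have key : ∀ l : ℕ, ((y2 * k : ℕ) : ℤ) ^ l + (y3 : ℤ) ^ l - ((k * y3 : ℕ) : ℤ) ^ l - (y2 : ℤ) ^ l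
      = ((y2 : ℤ) ^ l - (y3 : ℤ) ^ l) * ((k : ℤ) ^ l - 1) := by
    intro l
    push_cast
    ring
  rw [key, key]
  apply mul_dvd_mul
  · rw [pow_mul, pow_mul]
    exact sub_dvd_pow_sub_pow _ _ m
  · rw [pow_mul]
    simpa using sub_dvd_pow_sub_pow ((k : ℤ) ^ a) 1 m
end

section
/- Let S be a finite set of positive integers that is gcd-closed (i.e., gcd(x,y) ∈ S for all x, y ∈ S). For x ∈ S, define G_S(x) = {d ∈ S : d < x, d | x, and for all y ∈ S, d | y and y | x implies y ∈ {d, x}}. Suppose max over x ∈ S of |G_S(x)| = 2 and S satisfies condition 𝒢. Let x ∈ S with |G_S(x)| = 2, let y ∈ G_S(x), and let z ∈ S with z | x, z ≠ x, and z ∤ y. Then lcm(y, z) = x. -/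
/-- The set of greatest-type divisors of `x` in `S`. -/
def GTD (S : Finset ℕ) (x : ℕ) : Finset ℕ :=
  S.filter (fun d => d < x ∧ d ∣ x ∧ ∀ y ∈ S, d ∣ y → y ∣ x → y = d ∨ y = x)

/-- Condition 𝒢 for a set of positive integers. -/
def CondG (S : Finset ℕ) : Prop :=
  ∀ x ∈ S, (GTD S x).card ≤ 1 ∨
    ∃ y1 y2, y1 ≠ y2 ∧ GTD S x = {y1, y2} ∧ Nat.lcm y1 y2 = x ∧
      Nat.gcd y1 y2 ∈ GTD S y1 ∧ Nat.gcd y1 y2 ∈ GTD S y2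

lemma exists_GTD_dvd (S : Finset ℕ) (hpos : ∀ s ∈ S, 0 < s)
    (x : ℕ) (hx : x ∈ S) (d : ℕ) (hd : d ∈ S) (hdx : d ∣ x) (hdne : d ≠ x) :
    ∃ m ∈ GTD S x, d ∣ m := by
  classical
  set T := S.filter (fun u => d ∣ u ∧ u ∣ x ∧ u ≠ x) with hT
  have hTne : T.Nonempty := ⟨d, by simp [hT, hd, hdx, hdne]⟩
  obtain ⟨m, hmT, hma⟩ := T.exists_max_image id hTne
  rw [hT, Finset.mem_filter] at hmT
  obtain ⟨hmS, hdm, hmx, hmne⟩ := hmT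
  refine ⟨m, ?_, hdm⟩
  have hx0 : 0 < x := hpos x hx
  have hmlt : m < x := lt_of_le_of_ne (Nat.le_of_dvd hx0 hmx) hmne
  refine Finset.mem_filter.mpr ⟨hmS, hmlt, hmx, ?_⟩
  intro u huS hmu hux
  by_cases h : u = x
  · right; exact h
  · left
    have huT : u ∈ T := Finset.mem_filter.mpr ⟨huS, dvd_trans hdm hmu, hux, h⟩
    have h1 : u ≤ m := hma u huT
    have h2 : m ≤ u := Nat.le_of_dvd (hpos u huS) hmu
    omega

lemma key (S : Finset ℕ) (hpos : ∀ s ∈ S, 0 < s)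
    (hgcd : ∀ s ∈ S, ∀ t ∈ S, Nat.gcd s t ∈ S)
    (hmax : S.sup (fun s => (GTD S s).card) = 2)
    (hG : CondG S) :
    ∀ x, x ∈ S → (GTD S x).card = 2 →
      ∀ y ∈ GTD S x, ∀ z ∈ S, z ∣ x → z ≠ x → ¬ z ∣ y → Nat.lcm y z = x := by
  classical
  intro x
  induction x using Nat.strong_induction_on with
  | _ x IH =>
    intro hx hx2 y hy z hzS hzx hzne hzy
    rcases hG x hx with h1 | ⟨y1, y2, hne, hset, hlcm, hg1, hg2⟩
    · omega
    have main : ∀ a b, GTD S x = {a, b} → Nat.lcm a b = x →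
        Nat.gcd a b ∈ GTD S b → ¬ z ∣ a → Nat.lcm a z = x := by
      intro a b hsab hlab hgb hzy
      -- z divides some element of GTD S x
      obtain ⟨m, hmG, hzm⟩ := exists_GTD_dvd S hpos x hx z hzS hzx hzne
      rw [hsab] at hmG
      simp only [Finset.mem_insert, Finset.mem_singleton] at hmG
      have hzb : z ∣ b := by
        rcases hmG with rfl | rfl
        · exact absurd hzm hzy
        · exact hzm
      -- b is in S, b < x, b ∣ x
      have hbG : b ∈ GTD S x := by rw [hsab]; simp
      rw [GTD, Finset.mem_filter] at hbG
      obtain ⟨hbS, hblt, hbx, -⟩ := hbG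
      by_cases hzb' : z = b
      · subst hzb'; exact hlab
      · -- recurse into b
        set g := Nat.gcd a b with hg
        have hga : g ∣ a := Nat.gcd_dvd_left a b
        have hzg : ¬ z ∣ g := fun h => hzy (h.trans hga)
        have hcard2 : (GTD S b).card ≤ 2 :=
          le_of_le_of_eq (Finset.le_sup (f := fun s => (GTD S s).card) hbS) hmax
        by_cases hc1 : (GTD S b).card ≤ 1
        · exfalso
          obtain ⟨m', hm'G, hzm'⟩ := exists_GTD_dvd S hpos b hbS z hzS hzb hzb'
          have : m' = g := Finset.card_le_one.mp hc1 m' hm'G g hgb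
          exact hzg (this ▸ hzm')
        · have hIH := IH b hblt hbS (by omega) g hgb z hzS hzb hzb' hzg
          have h1 : Nat.lcm a z ∣ x := by
            rw [← hlab]
            exact Nat.lcm_dvd (Nat.dvd_lcm_left a b)
              (hzb.trans (Nat.dvd_lcm_right a b))
          have h2 : x ∣ Nat.lcm a z := by
            rw [← hlab]
            refine Nat.lcm_dvd (Nat.dvd_lcm_left a z) ?_
            rw [← hIH]
            exact Nat.lcm_dvd (hga.trans (Nat.dvd_lcm_left a z))
              (Nat.dvd_lcm_right a z)
          exact Nat.dvd_antisymm h1 h2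
    rw [hset] at hy
    simp only [Finset.mem_insert, Finset.mem_singleton] at hy
    rcases hy with rfl | rfl
    · exact main y y2 hset hlcm hg2 hzy
    · exact main y y1 (by rw [hset, Finset.pair_comm])
        (by rw [Nat.lcm_comm]; exact hlcm)
        (by rw [Nat.gcd_comm]; exact hg1) hzy

theorem stmt_3 (S : Finset ℕ) (hpos : ∀ s ∈ S, 0 < s)
    (hgcd : ∀ s ∈ S, ∀ t ∈ S, Nat.gcd s t ∈ S)
    (hmax : S.sup (fun s => (GTD S s).card) = 2)
    (hG : CondG S)
    (x : ℕ) (hx : x ∈ S) (hx2 : (GTD S x).card = 2)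
    (y : ℕ) (hy : y ∈ GTD S x)
    (z : ℕ) (hzS : z ∈ S) (hzx : z ∣ x) (hzne : z ≠ x) (hzy : ¬ z ∣ y) :
    Nat.lcm y z = x :=
  key S hpos hgcd hmax hG x hx hx2 y hy z hzS hzx hzne hzy
end

section
/- Let S = {x_1, ..., x_n} be a gcd-closed set of distinct positive integers and let a be a positive integer. Then the n×n matrix (S^a) with (i,j)-entry gcd(x_i, x_j)^a has determinant equal to the product over k = 1, ..., n of α_{a,k}, where α_{a,k} = Σ_{d | x_k, d ∤ x_t for all x_t < x_k in S} (ξ_a * μ)(d), with ξ_a(x) = x^a and * Dirichlet convolution with the Möbius function μ. -/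
/-!
Let `g(m) = ∑_{d ∣ m} f(d)`; Möbius inversion gives this for `g(m) = m^a`, `f = ξ_a * μ`.
Call `d` a new divisor of `x_k` if `d ∣ x_k` but `d` divides no smaller `x_t`. Every divisor of
some `x_i` is a new divisor of the least `x_k` it divides, and gcd-closedness gives
`d ∣ x_i ↔ x_k ∣ x_i` for such `d` (as `d ∣ gcd(x_k, x_i) ∈ S`). Hence the divisors of `x_i` are
the disjoint union of the new divisors of the `x_k ∣ x_i`, and with `α_k = ∑` of `f` over the new
divisors of `x_k`,
`g(gcd(x_i, x_j)) = ∑_{x_k ∣ x_i, x_k ∣ x_j} α_k`,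
i.e. the gcd matrix is `E · diag(α) · Eᵀ` for the divisibility matrix `E` of `S`, which is
unitriangular once `S` is listed by size.
-/

open ArithmeticFunction Finset Matrix
open scoped ArithmeticFunction.Moebius

/-- Jordan's totient `J_a = ξ_a * μ`. -/
def jordanTotient (a d : ℕ) : ℤ :=
  ∑ e ∈ d.divisors, (e : ℤ) ^ a * μ (d / e)

theorem sum_divisors_jordanTotient (a : ℕ) {m : ℕ} (hm : 0 < m) :
    ∑ d ∈ m.divisors, jordanTotient a d = (m : ℤ) ^ a := by
  refine (sum_eq_iff_sum_mul_moebius_eq (f := jordanTotient a) (g := fun m : ℕ => (m : ℤ) ^ a)).2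
    (fun d _ => ?_) m hm
  simp only [Int.cast_id]
  rw [jordanTotient, Nat.sum_divisorsAntidiagonal' fun e e' => μ e * (e' : ℤ) ^ a]
  exact sum_congr rfl fun e _ => mul_comm _ _

section GcdClosed

variable {ι : Type*} [Fintype ι] (x : ι → ℕ)

def newDivisors (k : ι) : Finset ℕ :=
  (x k).divisors.filter fun d => ∀ t, x t < x k → ¬ d ∣ x t

def divisibilityMatrix (R : Type*) [Zero R] [One R] : Matrix ι ι R :=
  of fun i k => if x k ∣ x i then 1 else 0

variable {x}

theorem exists_mem_newDivisors (hpos : ∀ i, 0 < x i) {d : ℕ} {i : ι} (h : d ∣ x i) :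
    ∃ k, d ∈ newDivisors x k := by
  classical
  obtain ⟨k, hk, hmin⟩ := exists_min_image (univ.filter fun t => d ∣ x t) x ⟨i, by simpa⟩
  rw [mem_filter] at hk
  refine ⟨k, mem_filter.2 ⟨Nat.mem_divisors.2 ⟨hk.2, (hpos k).ne'⟩, fun t ht hdt => ?_⟩⟩
  exact (hmin t (by simpa)).not_gt ht

theorem dvd_iff_of_mem_newDivisors (hpos : ∀ i, 0 < x i)
    (hgcd : ∀ i j, ∃ k, x k = Nat.gcd (x i) (x j)) {d : ℕ} {k : ι} (hd : d ∈ newDivisors x k)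
    (i : ι) : d ∣ x i ↔ x k ∣ x i := by
  obtain ⟨hdk, hnew⟩ := mem_filter.1 hd
  refine ⟨fun hdi => ?_, (Nat.dvd_of_mem_divisors hdk).trans⟩
  obtain ⟨g, hg⟩ := hgcd k i
  have hgk : x g ≤ x k := hg ▸ Nat.le_of_dvd (hpos k) (Nat.gcd_dvd_left _ _)
  have hdg : d ∣ x g := hg ▸ Nat.dvd_gcd (Nat.dvd_of_mem_divisors hdk) hdi
  have hgk' : x g = x k := hgk.antisymm (not_lt.1 fun hlt => hnew g hlt hdg)
  rw [← Nat.gcd_eq_left_iff_dvd, ← hg, hgk']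

theorem disjoint_newDivisors (hinj : Function.Injective x) (hpos : ∀ i, 0 < x i)
    (hgcd : ∀ i j, ∃ k, x k = Nat.gcd (x i) (x j)) {k l : ι} (hkl : k ≠ l) :
    Disjoint (newDivisors x k) (newDivisors x l) := by
  refine disjoint_left.2 fun d hk hl => hkl (hinj (Nat.dvd_antisymm ?_ ?_))
  · exact (dvd_iff_of_mem_newDivisors hpos hgcd hk l).1
      ((dvd_iff_of_mem_newDivisors hpos hgcd hl l).2 dvd_rfl)
  · exact (dvd_iff_of_mem_newDivisors hpos hgcd hl k).1
      ((dvd_iff_of_mem_newDivisors hpos hgcd hk k).2 dvd_rfl)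

theorem sum_divisors_eq_sum_newDivisors [DecidableEq ι] {M : Type*} [AddCommMonoid M]
    (hinj : Function.Injective x) (hpos : ∀ i, 0 < x i)
    (hgcd : ∀ i j, ∃ k, x k = Nat.gcd (x i) (x j)) (f : ℕ → M) (i : ι) :
    ∑ d ∈ (x i).divisors, f d = ∑ k with x k ∣ x i, ∑ d ∈ newDivisors x k, f d := by
  have hunion : (x i).divisors = (univ.filter fun k => x k ∣ x i).biUnion (newDivisors x) := by
    ext d
    simp only [mem_biUnion, mem_filter, mem_univ, true_and]
    constructor
    · intro hd
      obtain ⟨k, hk⟩ := exists_mem_newDivisors hpos (Nat.dvd_of_mem_divisors hd)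
      exact ⟨k, (dvd_iff_of_mem_newDivisors hpos hgcd hk i).1 (Nat.dvd_of_mem_divisors hd), hk⟩
    · rintro ⟨k, hki, hk⟩
      exact Nat.mem_divisors.2 ⟨(Nat.dvd_of_mem_divisors (mem_filter.1 hk).1).trans hki,
        (hpos i).ne'⟩
  rw [hunion, sum_biUnion fun k _ l _ hkl => disjoint_newDivisors hinj hpos hgcd hkl]

end GcdClosed

section GcdMatrix

variable {ι : Type*} [Fintype ι] [DecidableEq ι] {x : ι → ℕ} {R : Type*} [CommRing R]

theorem det_divisibilityMatrix (hinj : Function.Injective x) (hpos : ∀ i, 0 < x i) :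
    (divisibilityMatrix x R).det = 1 := by
  have htri : (divisibilityMatrix x R).BlockTriangular (OrderDual.toDual ∘ x) := by
    intro i k hlt
    simp only [divisibilityMatrix, of_apply, ite_eq_right_iff]
    exact fun hdvd => absurd hlt (Nat.le_of_dvd (hpos i) hdvd).not_gt
  rw [htri.det, prod_image (OrderDual.toDual.injective.comp hinj).injOn]
  refine prod_eq_one fun i _ => ?_
  have : Unique {j // (OrderDual.toDual ∘ x) j = (OrderDual.toDual ∘ x) i} :=
    ⟨⟨⟨i, rfl⟩⟩, fun j => Subtype.ext (hinj j.2)⟩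
  rw [det_unique]
  simp [divisibilityMatrix, toSquareBlock_def]

theorem gcdMatrix_eq_mul_diagonal_mul (hinj : Function.Injective x) (hpos : ∀ i, 0 < x i)
    (hgcd : ∀ i j, ∃ k, x k = Nat.gcd (x i) (x j)) {f g : ℕ → R}
    (hfg : ∀ m, 0 < m → ∑ d ∈ m.divisors, f d = g m) :
    of (fun i j => g (Nat.gcd (x i) (x j))) =
      divisibilityMatrix x R * diagonal (fun k => ∑ d ∈ newDivisors x k, f d) *
        (divisibilityMatrix x R)ᵀ := by
  ext i j
  obtain ⟨m, hm⟩ := hgcd i j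
  rw [of_apply, ← hm, ← hfg _ (hpos m), sum_divisors_eq_sum_newDivisors hinj hpos hgcd,
    Matrix.mul_apply, sum_filter]
  refine sum_congr rfl fun k _ => ?_
  simp only [hm, Nat.dvd_gcd_iff, mul_diagonal, transpose_apply, divisibilityMatrix, of_apply]
  split_ifs <;> simp_all

theorem det_gcdMatrix (hinj : Function.Injective x) (hpos : ∀ i, 0 < x i)
    (hgcd : ∀ i j, ∃ k, x k = Nat.gcd (x i) (x j)) {f g : ℕ → R}
    (hfg : ∀ m, 0 < m → ∑ d ∈ m.divisors, f d = g m) :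
    (of fun i j => g (Nat.gcd (x i) (x j))).det = ∏ k, ∑ d ∈ newDivisors x k, f d := by
  rw [gcdMatrix_eq_mul_diagonal_mul hinj hpos hgcd hfg, det_mul, det_mul, det_transpose,
    det_divisibilityMatrix hinj hpos, det_diagonal, one_mul, mul_one]

end GcdMatrix

theorem stmt_4_general (n : ℕ) (a : ℕ)
    (x : Fin n → ℕ) (hinj : Function.Injective x) (hpos : ∀ i, 0 < x i)
    (hgcd : ∀ i j, ∃ k, x k = Nat.gcd (x i) (x j)) :
    (Matrix.of fun i j : Fin n => ((Nat.gcd (x i) (x j) : ℤ)) ^ a).det =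
      ∏ k : Fin n,
        ∑ d ∈ (x k).divisors.filter (fun d => ∀ t, x t < x k → ¬ d ∣ x t),
          ∑ e ∈ d.divisors, (e : ℤ) ^ a * (μ (d / e)) := by
  rw [det_gcdMatrix (g := fun m : ℕ => (m : ℤ) ^ a) hinj hpos hgcd
    fun _ => sum_divisors_jordanTotient a]
  unfold newDivisors jordanTotient
  -- over `Fin n` the filter is decided by `Nat.decidableForallFin`, not the `Fintype` instance
  congr!

theorem stmt_4 (n : ℕ) (hn : 0 < n) (a : ℕ) (ha : 0 < a)
    (x : Fin n → ℕ) (hinj : Function.Injective x) (hpos : ∀ i, 0 < x i)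
    (hgcd : ∀ i j, ∃ k, x k = Nat.gcd (x i) (x j)) :
    (Matrix.of fun i j : Fin n => ((Nat.gcd (x i) (x j) : ℤ)) ^ a).det =
      ∏ k : Fin n,
        ∑ d ∈ (x k).divisors.filter (fun d => ∀ t, x t < x k → ¬ d ∣ x t),
          ∑ e ∈ d.divisors, (e : ℤ) ^ a * (μ (d / e)) :=
  stmt_4_general n a x hinj hpos hgcd
end

section
/- Let S = {x_1, ..., x_n} (with x_1 < ... < x_n) be a gcd-closed set of distinct positive integers with max_{x∈S} |G_S(x)| = 2, and let a ≥ 1. Then α_{a,1} = x_1^a, and for 2 ≤ m ≤ n: if G_S(x_m) = {x_{m_0}} then α_{a,m} = x_m^a - x_{m_0}^a; if G_S(x_m) = {x_{m_1}, x_{m_2}} with x_{m_3} = gcd(x_{m_1}, x_{m_2}), then α_{a,m} = x_m^a - x_{m_1}^a - x_{m_2}^a + x_{m_3}^a. -/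
/-!
Möbius inversion of `ξ_a` gives `∑_{d ∣ N} (ξ_a * μ)(d) = N ^ a`. In a gcd-closed set, a divisor
`d` of `x_k` divides some smaller element iff it divides one of the greatest-type divisors of
`x_k` (the gcd of `x_t` with `x_k` lies below a greatest-type divisor). So `α_{a,k}` sums
`(ξ_a * μ)(d)` over the divisors of `x_k` that divide none of its greatest-type divisors, and
inclusion–exclusion over at most two of them gives the stated formulas.
-/

open ArithmeticFunction
open scoped ArithmeticFunction.Moebius

open Finset

theorem sum_divisors_sum_mul_moebius {R : Type*} [CommRing R] (g : ℕ → R) {N : ℕ} (hN : 0 < N) :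
    ∑ d ∈ N.divisors, ∑ e ∈ d.divisors, g e * μ (d / e) = g N := by
  refine sum_eq_iff_sum_mul_moebius_eq.2 (fun n _ => ?_) N hN
  rw [Nat.sum_divisorsAntidiagonal' (f := fun c e => (μ c : R) * g e)]
  exact sum_congr rfl fun _ _ => mul_comm _ _

section InclusionExclusion

variable {R : Type*} (f : ℕ → R) {N : ℕ}

theorem sum_divisors_ite_dvd [AddCommMonoid R] (hN : N ≠ 0) {M : ℕ} (hM : M ∣ N) :
    ∑ d ∈ N.divisors, (if d ∣ M then f d else 0) = ∑ d ∈ M.divisors, f d := by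
  rw [← sum_filter, Nat.divisors_filter_dvd_of_dvd hN hM]

variable [AddCommGroup R]

theorem sum_divisors_filter_not_dvd (hN : N ≠ 0) {y : ℕ} (hy : y ∣ N) :
    ∑ d ∈ N.divisors with ¬ d ∣ y, f d = ∑ d ∈ N.divisors, f d - ∑ d ∈ y.divisors, f d := by
  rw [← sum_divisors_ite_dvd f hN hy, sum_filter, ← sum_sub_distrib]
  exact sum_congr rfl fun d _ => by by_cases h : d ∣ y <;> simp [h]

theorem sum_divisors_filter_not_dvd_and_not_dvd (hN : N ≠ 0) {y₁ y₂ : ℕ}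
    (hy₁ : y₁ ∣ N) (hy₂ : y₂ ∣ N) :
    ∑ d ∈ N.divisors with ¬ d ∣ y₁ ∧ ¬ d ∣ y₂, f d =
      ∑ d ∈ N.divisors, f d - ∑ d ∈ y₁.divisors, f d - ∑ d ∈ y₂.divisors, f d
        + ∑ d ∈ (y₁.gcd y₂).divisors, f d := by
  rw [← sum_divisors_ite_dvd f hN hy₁, ← sum_divisors_ite_dvd f hN hy₂,
    ← sum_divisors_ite_dvd f hN ((Nat.gcd_dvd_left _ _).trans hy₁), sum_filter,
    ← sum_sub_distrib, ← sum_sub_distrib, ← sum_add_distrib]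
  refine sum_congr rfl fun d _ => ?_
  by_cases h₁ : d ∣ y₁ <;> by_cases h₂ : d ∣ y₂ <;> simp [h₁, h₂, Nat.dvd_gcd_iff]

end InclusionExclusion

section GreatestTypeDivisors

variable {S : Finset ℕ} {X : ℕ}

theorem dvd_of_mem_GTD {y : ℕ} (hy : y ∈ GTD S X) : y ∣ X := (mem_filter.1 hy).2.2.1

theorem pos_of_mem_GTD (h0 : 0 ∉ S) {y : ℕ} (hy : y ∈ GTD S X) : 0 < y :=
  Nat.pos_of_ne_zero (ne_of_mem_of_not_mem (mem_filter.1 hy).1 h0)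

theorem exists_mem_GTD_dvd {z : ℕ} (hz : z ∈ S) (hzX : z ∣ X) (hlt : z < X) :
    ∃ y ∈ GTD S X, z ∣ y := by
  have hX : X ≠ 0 := ((Nat.zero_le z).trans_lt hlt).ne'
  set T := S.filter (fun w => z ∣ w ∧ w ∣ X ∧ w ≠ X)
  have hT : T.Nonempty := ⟨z, by simp [T, hz, hzX, hlt.ne]⟩
  obtain ⟨hyS, hzy, hyX, hyne⟩ := mem_filter.1 (T.max'_mem hT)
  refine ⟨T.max' hT, mem_filter.2 ⟨hyS, (Nat.le_of_dvd (Nat.pos_of_ne_zero hX) hyX).lt_of_ne hyne,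
    hyX, fun w hwS hyw hwX => ?_⟩, hzy⟩
  by_cases hwX' : w = X
  · exact Or.inr hwX'
  · refine Or.inl (le_antisymm (T.le_max' w (mem_filter.2 ⟨hwS, hzy.trans hyw, hwX, hwX'⟩)) ?_)
    exact Nat.le_of_dvd (Nat.pos_of_ne_zero (ne_zero_of_dvd_ne_zero hX hwX)) hyw

theorem forall_lt_not_dvd_iff_forall_GTD_not_dvd (hgcd : ∀ s ∈ S, ∀ t ∈ S, s.gcd t ∈ S)
    (h0 : 0 ∉ S) (hX : X ∈ S) {d : ℕ} (hd : d ∣ X) :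
    (∀ s ∈ S, s < X → ¬ d ∣ s) ↔ ∀ y ∈ GTD S X, ¬ d ∣ y := by
  refine ⟨fun h y hy => ?_, fun h s hs hsX hds => ?_⟩
  · obtain ⟨hyS, hyX, -⟩ := mem_filter.1 hy
    exact h y hyS hyX
  · have hs0 : 0 < s := Nat.pos_of_ne_zero (ne_of_mem_of_not_mem hs h0)
    obtain ⟨y, hy, hgy⟩ := exists_mem_GTD_dvd (hgcd s hs X hX) (Nat.gcd_dvd_right s X)
      ((Nat.gcd_le_left X hs0).trans_lt hsX)
    exact h y hy ((Nat.dvd_gcd hds hd).trans hgy)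

end GreatestTypeDivisors

theorem stmt_6_general (n : ℕ) (hn : 0 < n) (a : ℕ)
    (x : Fin n → ℕ) (hmono : StrictMono x) (hpos : ∀ i, 0 < x i)
    (S : Finset ℕ) (hS : S = Finset.image x Finset.univ)
    (hgcd : ∀ s ∈ S, ∀ t ∈ S, Nat.gcd s t ∈ S)
    (α : Fin n → ℤ)
    (hα : ∀ k, α k =
      ∑ d ∈ (x k).divisors.filter (fun d => ∀ t, x t < x k → ¬ d ∣ x t),
        ∑ e ∈ d.divisors, (e : ℤ) ^ a * (μ (d / e))) :
    α ⟨0, hn⟩ = (x ⟨0, hn⟩ : ℤ) ^ a ∧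
    (∀ m : Fin n, ∀ y : ℕ, GTD S (x m) = {y} →
      α m = (x m : ℤ) ^ a - (y : ℤ) ^ a) ∧
    (∀ m : Fin n, ∀ y1 y2 : ℕ, y1 ≠ y2 → GTD S (x m) = {y1, y2} →
      α m = (x m : ℤ) ^ a - (y1 : ℤ) ^ a - (y2 : ℤ) ^ a + (Nat.gcd y1 y2 : ℤ) ^ a) := by
  set f : ℕ → ℤ := fun d => ∑ e ∈ d.divisors, (e : ℤ) ^ a * μ (d / e)
  have hf : ∀ N : ℕ, 0 < N → ∑ d ∈ N.divisors, f d = (N : ℤ) ^ a :=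
    fun N => sum_divisors_sum_mul_moebius (fun e : ℕ => (e : ℤ) ^ a)
  have h0 : 0 ∉ S := by simp [hS, (hpos _).ne']
  have hα' : ∀ k, α k = ∑ d ∈ (x k).divisors with ∀ y ∈ GTD S (x k), ¬ d ∣ y, f d := by
    intro k
    rw [hα]
    refine sum_congr (filter_congr fun d hd => ?_) fun _ _ => rfl
    rw [← forall_lt_not_dvd_iff_forall_GTD_not_dvd hgcd h0 (by simp [hS])
      (Nat.dvd_of_mem_divisors hd)]
    simp [hS]
  refine ⟨?_, fun m y hm => ?_, fun m y₁ y₂ _ hm => ?_⟩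
  · have hmin : ∀ t, ¬ x t < x ⟨0, hn⟩ := fun t => (hmono.monotone (Nat.zero_le t.val)).not_gt
    rw [hα, filter_true_of_mem fun d _ t ht => absurd ht (hmin t)]
    exact hf _ (hpos _)
  · have hy : y ∈ GTD S (x m) := hm ▸ mem_singleton_self y
    rw [hα', hm]
    simp only [mem_singleton, forall_eq]
    rw [sum_divisors_filter_not_dvd f (hpos m).ne' (dvd_of_mem_GTD hy), hf _ (hpos m),
      hf _ (pos_of_mem_GTD h0 hy)]
  · have hy₁ : y₁ ∈ GTD S (x m) := hm ▸ mem_insert_self y₁ {y₂}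
    have hy₂ : y₂ ∈ GTD S (x m) := hm ▸ mem_insert_of_mem (mem_singleton_self y₂)
    rw [hα', hm]
    simp only [mem_insert, mem_singleton, forall_eq_or_imp, forall_eq]
    rw [sum_divisors_filter_not_dvd_and_not_dvd f (hpos m).ne' (dvd_of_mem_GTD hy₁)
        (dvd_of_mem_GTD hy₂), hf _ (hpos m), hf _ (pos_of_mem_GTD h0 hy₁),
      hf _ (pos_of_mem_GTD h0 hy₂), hf _ (Nat.gcd_pos_of_pos_left _ (pos_of_mem_GTD h0 hy₁))]

theorem stmt_6 (n : ℕ) (hn : 0 < n) (a : ℕ) (ha : 0 < a)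
    (x : Fin n → ℕ) (hmono : StrictMono x) (hpos : ∀ i, 0 < x i)
    (S : Finset ℕ) (hS : S = Finset.image x Finset.univ)
    (hgcd : ∀ s ∈ S, ∀ t ∈ S, Nat.gcd s t ∈ S)
    (hmax : S.sup (fun s => (GTD S s).card) = 2)
    (α : Fin n → ℤ)
    (hα : ∀ k, α k =
      ∑ d ∈ (x k).divisors.filter (fun d => ∀ t, x t < x k → ¬ d ∣ x t),
        ∑ e ∈ d.divisors, (e : ℤ) ^ a * (μ (d / e))) :
    α ⟨0, hn⟩ = (x ⟨0, hn⟩ : ℤ) ^ a ∧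
    (∀ m : Fin n, ∀ y : ℕ, GTD S (x m) = {y} →
      α m = (x m : ℤ) ^ a - (y : ℤ) ^ a) ∧
    (∀ m : Fin n, ∀ y1 y2 : ℕ, y1 ≠ y2 → GTD S (x m) = {y1, y2} →
      α m = (x m : ℤ) ^ a - (y1 : ℤ) ^ a - (y2 : ℤ) ^ a + (Nat.gcd y1 y2 : ℤ) ^ a) :=
  stmt_6_general n hn a x hmono hpos S hS hgcd α hα
end

section
/- Let a, b be positive integers with a | b. Let S be a gcd-closed set containing elements x, y, z with G_S(x) = {y} (i.e., y is the unique greatest-type divisor of x in S). Then x^a - y^a divides gcd(x,z)^b - gcd(y,z)^b, and x^a - y^a divides lcm(x,z)^b - lcm(y,z)^b. -/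
theorem stmt_8 (a b : ℕ) (ha : 0 < a) (hb : 0 < b) (hab : a ∣ b)
    (S : Finset ℕ) (hpos : ∀ s ∈ S, 0 < s)
    (hgcd : ∀ s ∈ S, ∀ t ∈ S, Nat.gcd s t ∈ S)
    (x y z : ℕ) (hx : x ∈ S) (hy : y ∈ S) (hz : z ∈ S)
    (hG : GTD S x = {y}) :
    ((x : ℤ) ^ a - (y : ℤ) ^ a) ∣ ((Nat.gcd x z : ℤ) ^ b - (Nat.gcd y z : ℤ) ^ b) ∧
    ((x : ℤ) ^ a - (y : ℤ) ^ a) ∣ ((Nat.lcm x z : ℤ) ^ b - (Nat.lcm y z : ℤ) ^ b) := by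
  have hyG : y ∈ GTD S x := by rw [hG]; exact Finset.mem_singleton_self y
  rw [GTD, Finset.mem_filter] at hyG
  obtain ⟨hyS, hylt, hyx, -⟩ := hyG
  have hpow : ((x : ℤ) ^ a - (y : ℤ) ^ a) ∣ ((x : ℤ) ^ b - (y : ℤ) ^ b) := by
    obtain ⟨k, rfl⟩ := hab
    rw [pow_mul, pow_mul]
    exact sub_dvd_pow_sub_pow _ _ k
  -- key lemma: any proper divisor of x in S divides y
  have hkey : ∀ d ∈ S, d ∣ x → d ≠ x → d ∣ y := by
    intro d hd hdx hdne
    set T := S.filter (fun w => d ∣ w ∧ w ∣ x ∧ w ≠ x) with hT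
    have hdT : d ∈ T := by simp [hT, hd, hdx, hdne]
    obtain ⟨m, hmT, hmax⟩ := T.exists_max_image id ⟨d, hdT⟩
    rw [hT, Finset.mem_filter] at hmT
    obtain ⟨hmS, hdm, hmx, hmne⟩ := hmT
    have hmG : m ∈ GTD S x := by
      rw [GTD, Finset.mem_filter]
      refine ⟨hmS, lt_of_le_of_ne (Nat.le_of_dvd (hpos x hx) hmx) hmne, hmx, ?_⟩
      intro w hwS hmw hwx
      by_cases hwne : w = x
      · exact Or.inr hwne
      · left
        have hwT : w ∈ T := by
          rw [hT, Finset.mem_filter]; exact ⟨hwS, hdm.trans hmw, hwx, hwne⟩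
        exact le_antisymm (hmax w hwT) (Nat.le_of_dvd (hpos w hwS) hmw)
    rw [hG, Finset.mem_singleton] at hmG
    exact hmG ▸ hdm
  have hg : Nat.gcd x z ∈ S := hgcd x hx z hz
  by_cases hxz : Nat.gcd x z = x
  · -- x ∣ z
    have hxdz : x ∣ z := hxz ▸ Nat.gcd_dvd_right x z
    have hgyz : Nat.gcd y z = y := Nat.gcd_eq_left (hyx.trans hxdz)
    have hl1 : Nat.lcm x z = z := Nat.dvd_antisymm (Nat.lcm_dvd hxdz dvd_rfl) (Nat.dvd_lcm_right x z)
    have hl2 : Nat.lcm y z = z := Nat.dvd_antisymm (Nat.lcm_dvd (hyx.trans hxdz) dvd_rfl) (Nat.dvd_lcm_right y z)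
    rw [hxz, hgyz, hl1, hl2]
    exact ⟨hpow, by simp⟩
  · have hd : Nat.gcd x z ∣ y := hkey _ hg (Nat.gcd_dvd_left x z) hxz
    have heq : Nat.gcd x z = Nat.gcd y z :=
      Nat.dvd_antisymm (Nat.dvd_gcd hd (Nat.gcd_dvd_right x z))
        (Nat.dvd_gcd ((Nat.gcd_dvd_left y z).trans hyx) (Nat.gcd_dvd_right y z))
    constructor
    · rw [heq]; simp
    · -- lcm x z = x * (z / g), lcm y z = y * (z / g) where g = gcd x z = gcd y z
      have hgz : Nat.gcd x z ∣ z := Nat.gcd_dvd_right x z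
      have hl1 : Nat.lcm x z = x * (z / Nat.gcd x z) := by
        rw [Nat.lcm, Nat.mul_div_assoc x hgz]
      have hl2 : Nat.lcm y z = y * (z / Nat.gcd x z) := by
        rw [Nat.lcm, heq, Nat.mul_div_assoc y (heq ▸ hgz)]
      rw [hl1, hl2]
      push_cast
      rw [mul_pow, mul_pow, ← sub_mul]
      exact hpow.mul_right _
end

section
/- Let a, b be positive integers with a | b. Let S be a gcd-closed set with x, y, z, r ∈ S such that G_S(x) = {y} and r | x. Then r^a·(y^a - x^a) divides y^a·lcm(z,x)^b - x^a·lcm(z,y)^b. -/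
lemma gtd_aux (S : Finset ℕ) (hpos : ∀ s ∈ S, 0 < s) (x y : ℕ)
    (hG : GTD S x = {y}) :
    ∀ n d, x - d ≤ n → d ∈ S → d ∣ x → d ≠ x → 0 < x → d ∣ y := by
  intro n
  induction n with
  | zero =>
    intro d h hd hdx hdne hx0
    have : d < x := lt_of_le_of_ne (Nat.le_of_dvd hx0 hdx) hdne
    omega
  | succ n ih =>
    intro d h hd hdx hdne hx0
    have hdltx : d < x := lt_of_le_of_ne (Nat.le_of_dvd hx0 hdx) hdne
    by_cases hmem : d ∈ GTD S x
    · rw [hG, Finset.mem_singleton] at hmem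
      exact hmem ▸ dvd_refl y
    · simp only [GTD, Finset.mem_filter] at hmem
      push_neg at hmem
      obtain ⟨w, hwS, hdw, hwx, hwd, hwne⟩ := hmem hd hdltx hdx
      have hw0 : 0 < w := hpos w hwS
      have hdw' : d < w := lt_of_le_of_ne (Nat.le_of_dvd hw0 hdw) (fun e => hwd e.symm)
      have : x - w ≤ n := by omega
      exact dvd_trans hdw (ih w this hwS hwx hwne hx0)

set_option maxHeartbeats 800000 in
theorem stmt_9 (a b : ℕ) (ha : 0 < a) (hb : 0 < b) (hab : a ∣ b)
    (S : Finset ℕ) (hpos : ∀ s ∈ S, 0 < s)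
    (hgcd : ∀ s ∈ S, ∀ t ∈ S, Nat.gcd s t ∈ S)
    (x y z r : ℕ) (hx : x ∈ S) (hy : y ∈ S) (hz : z ∈ S) (hr : r ∈ S)
    (hG : GTD S x = {y}) (hrx : r ∣ x) :
    ((r : ℤ) ^ a * ((y : ℤ) ^ a - (x : ℤ) ^ a)) ∣
      ((y : ℤ) ^ a * (Nat.lcm z x : ℤ) ^ b - (x : ℤ) ^ a * (Nat.lcm z y : ℤ) ^ b) := by
  have hx0 : 0 < x := hpos x hx
  have hz0 : 0 < z := hpos z hz
  have hymem : y ∈ GTD S x := by rw [hG]; exact Finset.mem_singleton_self y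
  simp only [GTD, Finset.mem_filter] at hymem
  obtain ⟨hyS, hyltx, hyx, -⟩ := hymem
  have hab' : a ≤ b := Nat.le_of_dvd hb hab
  obtain ⟨m, hm⟩ := hab
  obtain ⟨k, rfl⟩ : ∃ k, m = k + 1 := ⟨m - 1, by
    have : m ≠ 0 := by rintro rfl; simp at hm; omega
    omega⟩
  have hbk : b = a + a * k := by rw [hm]; ring
  set g := Nat.gcd z x with hg
  have hgS : g ∈ S := hgcd z hz x hx
  have hgx : g ∣ x := Nat.gcd_dvd_right z x
  have hgz : g ∣ z := Nat.gcd_dvd_left z x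
  by_cases hgeq : g = x
  · -- x ∣ z
    have hxz : x ∣ z := hgeq ▸ hgz
    have hyz : y ∣ z := hyx.trans hxz
    have h1 : Nat.lcm z x = z := Nat.dvd_antisymm (Nat.lcm_dvd dvd_rfl hxz) (Nat.dvd_lcm_left z x)
    have h2 : Nat.lcm z y = z := Nat.dvd_antisymm (Nat.lcm_dvd dvd_rfl hyz) (Nat.dvd_lcm_left z y)
    rw [h1, h2]
    have heq : (y:ℤ) ^ a * (z:ℤ) ^ b - (x:ℤ) ^ a * (z:ℤ) ^ b
        = (z:ℤ) ^ b * ((y:ℤ) ^ a - (x:ℤ) ^ a) := by ring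
    rw [heq]
    have hrz : (r:ℤ) ^ a ∣ (z:ℤ) ^ b := by
      have : (r:ℤ) ∣ (z:ℤ) := Int.natCast_dvd_natCast.mpr (hrx.trans hxz)
      calc (r:ℤ)^a ∣ (z:ℤ)^a := pow_dvd_pow_of_dvd this a
        _ ∣ (z:ℤ)^b := pow_dvd_pow _ hab'
    exact mul_dvd_mul hrz (dvd_refl _)
  · -- g proper divisor of x, so g ∣ y
    have hgy : g ∣ y := gtd_aux S hpos x y hG (x - g) g le_rfl hgS hgx hgeq hx0
    have hgy' : Nat.gcd z y = g :=
      Nat.dvd_antisymm (Nat.dvd_gcd (Nat.gcd_dvd_left z y) ((Nat.gcd_dvd_right z y).trans hyx))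
        (Nat.dvd_gcd hgz hgy)
    have hg0 : 0 < g := Nat.gcd_pos_of_pos_left x hz0
    have e1 : (g:ℤ) * (Nat.lcm z x : ℤ) = (z:ℤ) * (x:ℤ) := by
      exact_mod_cast congrArg (Nat.cast : ℕ → ℤ) (Nat.gcd_mul_lcm z x)
    have e2 : (g:ℤ) * (Nat.lcm z y : ℤ) = (z:ℤ) * (y:ℤ) := by
      have := Nat.gcd_mul_lcm z y
      rw [hgy'] at this
      exact_mod_cast congrArg (Nat.cast : ℕ → ℤ) this
    have hgne : ((g:ℤ))^b ≠ 0 := pow_ne_zero _ (by exact_mod_cast hg0.ne')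
    rw [← mul_dvd_mul_iff_left hgne]
    have key : (g:ℤ)^b * ((y:ℤ) ^ a * (Nat.lcm z x : ℤ) ^ b - (x:ℤ) ^ a * (Nat.lcm z y : ℤ) ^ b)
        = ((z:ℤ)^b * (x:ℤ)^a * (((x:ℤ)^a)^k - ((y:ℤ)^a)^k)) * (y:ℤ)^a := by
      have l1 : ((g:ℤ) * (Nat.lcm z x : ℤ))^b = ((z:ℤ) * (x:ℤ))^b := by rw [e1]
      have l2 : ((g:ℤ) * (Nat.lcm z y : ℤ))^b = ((z:ℤ) * (y:ℤ))^b := by rw [e2]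
      rw [mul_pow, mul_pow] at l1 l2
      have hxb : (x:ℤ)^b = (x:ℤ)^a * ((x:ℤ)^a)^k := by
        rw [← pow_mul, ← pow_add, ← hbk]
      have hyb : (y:ℤ)^b = (y:ℤ)^a * ((y:ℤ)^a)^k := by
        rw [← pow_mul, ← pow_add, ← hbk]
      calc (g:ℤ)^b * ((y:ℤ)^a * (Nat.lcm z x:ℤ)^b - (x:ℤ)^a * (Nat.lcm z y:ℤ)^b)
          = (y:ℤ)^a * ((g:ℤ)^b * (Nat.lcm z x:ℤ)^b) - (x:ℤ)^a * ((g:ℤ)^b * (Nat.lcm z y:ℤ)^b) := by ring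
        _ = (y:ℤ)^a * ((z:ℤ)^b * (x:ℤ)^b) - (x:ℤ)^a * ((z:ℤ)^b * (y:ℤ)^b) := by rw [l1, l2]
        _ = ((z:ℤ)^b * (x:ℤ)^a * (((x:ℤ)^a)^k - ((y:ℤ)^a)^k)) * (y:ℤ)^a := by
            rw [hxb, hyb]; ring
    rw [key]
    have d1 : (g:ℤ)^b ∣ (z:ℤ)^b := pow_dvd_pow_of_dvd (Int.natCast_dvd_natCast.mpr hgz) b
    have d2 : (r:ℤ)^a ∣ (x:ℤ)^a := pow_dvd_pow_of_dvd (Int.natCast_dvd_natCast.mpr hrx) a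
    have d3 : (y:ℤ)^a - (x:ℤ)^a ∣ ((x:ℤ)^a)^k - ((y:ℤ)^a)^k := by
      have := sub_dvd_pow_sub_pow ((x:ℤ)^a) ((y:ℤ)^a) k
      have h' : (y:ℤ)^a - (x:ℤ)^a ∣ (x:ℤ)^a - (y:ℤ)^a := ⟨-1, by ring⟩
      exact h'.trans this
    have : (g:ℤ)^b * ((r:ℤ)^a * ((y:ℤ)^a - (x:ℤ)^a))
        ∣ (z:ℤ)^b * (x:ℤ)^a * (((x:ℤ)^a)^k - ((y:ℤ)^a)^k) := by
      have := mul_dvd_mul (mul_dvd_mul d1 d2) d3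
      calc (g:ℤ)^b * ((r:ℤ)^a * ((y:ℤ)^a - (x:ℤ)^a))
          = (g:ℤ)^b * (r:ℤ)^a * ((y:ℤ)^a - (x:ℤ)^a) := by ring
        _ ∣ _ := this
    exact this.mul_right _
end

section
/- Let a, b be positive integers with a | b, and let S be a gcd-closed set of n distinct positive integers with max_{x∈S} |G_S(x)| = 2 that satisfies condition 𝒢. Then there exist matrices A, B, C ∈ M_n(ℤ) with (S^b) = (S^a)·A, [S^b] = (S^a)·B, and [S^b] = [S^a]·C, i.e., (S^a) | (S^b), (S^a) | [S^b], and [S^a] | [S^b] in the ring M_n(ℤ). -/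
open Finset

/-- Möbius-type transform over the divisibility poset restricted to `S`. -/
def mob {R : Type*} [CommRing R] (S : Finset ℕ) (f : ℕ → R) (z : ℕ) : R :=
  f z - ∑ w ∈ (S.filter fun w => w ∣ z ∧ w < z).attach, mob S f w.1
termination_by z
decreasing_by
  have := w.2
  simp only [Finset.mem_filter] at this
  exact this.2.2

lemma mob_eq {R : Type*} [CommRing R] (S : Finset ℕ) (f : ℕ → R) (z : ℕ) :
    mob S f z = f z - ∑ w ∈ S.filter (fun w => w ∣ z ∧ w < z), mob S f w := by
  rw [mob, Finset.sum_attach]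

lemma filter_dvd_eq_insert (S : Finset ℕ) (hSpos : ∀ w ∈ S, 0 < w) {z : ℕ} (hz : z ∈ S) :
    S.filter (· ∣ z) = insert z (S.filter (fun w => w ∣ z ∧ w < z)) := by
  ext w
  simp only [mem_filter, mem_insert]
  constructor
  · rintro ⟨hwS, hwz⟩
    rcases eq_or_lt_of_le (Nat.le_of_dvd (hSpos z hz) hwz) with h | h
    · exact Or.inl h
    · exact Or.inr ⟨hwS, hwz, h⟩
  · rintro (rfl | ⟨h1, h2, h3⟩)
    · exact ⟨hz, dvd_rfl⟩
    · exact ⟨h1, h2⟩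

lemma sum_mob {R : Type*} [CommRing R] (S : Finset ℕ) (hSpos : ∀ w ∈ S, 0 < w)
    (f : ℕ → R) {z : ℕ} (hz : z ∈ S) :
    ∑ w ∈ S.filter (· ∣ z), mob S f w = f z := by
  rw [filter_dvd_eq_insert S hSpos hz, Finset.sum_insert (by simp), mob_eq]
  ring
lemma mem_GTD {S : Finset ℕ} {x d : ℕ} :
    d ∈ GTD S x ↔ d ∈ S ∧ d < x ∧ d ∣ x ∧ ∀ y ∈ S, d ∣ y → y ∣ x → y = d ∨ y = x := by
  simp [GTD, and_assoc]

/-- every proper divisor (in S) of z divides some greatest-type divisor. -/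
lemma exists_gtd_dvd (S : Finset ℕ) (hSpos : ∀ w ∈ S, 0 < w) {z w : ℕ} (hz : z ∈ S)
    (hw : w ∈ S) (hdvd : w ∣ z) (hlt : w < z) : ∃ y ∈ GTD S z, w ∣ y := by
  classical
  set T := S.filter (fun u => w ∣ u ∧ u ∣ z ∧ u ≠ z) with hT
  have hwT : w ∈ T := by
    simp only [hT, mem_filter]
    exact ⟨hw, dvd_rfl, hdvd, Nat.ne_of_lt hlt⟩
  have hTne : T.Nonempty := ⟨w, hwT⟩
  set y := T.max' hTne with hy
  have hyT : y ∈ T := T.max'_mem hTne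
  simp only [hT, mem_filter] at hyT
  obtain ⟨hyS, hwy, hyz, hyne⟩ := hyT
  refine ⟨y, ?_, hwy⟩
  rw [mem_GTD]
  refine ⟨hyS, lt_of_le_of_ne (Nat.le_of_dvd (hSpos z hz) hyz) hyne, hyz, ?_⟩
  intro u huS hyu huz
  by_cases huzeq : u = z
  · exact Or.inr huzeq
  · have huT : u ∈ T := by
      simp only [hT, mem_filter]
      exact ⟨huS, hwy.trans hyu, huz, huzeq⟩
    have h1 : u ≤ y := T.le_max' u huT
    have h2 : y ≤ u := Nat.le_of_dvd (hSpos u huS) hyu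
    exact Or.inl (le_antisymm h1 h2)

lemma gtd_mem {S : Finset ℕ} {z y : ℕ} (h : y ∈ GTD S z) : y ∈ S ∧ y < z ∧ y ∣ z := by
  rw [mem_GTD] at h; exact ⟨h.1, h.2.1, h.2.2.1⟩

/-- the proper-divisor set when GTD is empty -/
lemma Dset_empty (S : Finset ℕ) (hSpos : ∀ w ∈ S, 0 < w) {z : ℕ} (hz : z ∈ S)
    (h : GTD S z = ∅) : S.filter (fun w => w ∣ z ∧ w < z) = ∅ := by
  rw [Finset.eq_empty_iff_forall_notMem]
  intro w hw
  simp only [mem_filter] at hw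
  obtain ⟨y, hy, -⟩ := exists_gtd_dvd S hSpos hz hw.1 hw.2.1 hw.2.2
  simp [h] at hy

lemma Dset_single (S : Finset ℕ) (hSpos : ∀ w ∈ S, 0 < w) {z y : ℕ} (hz : z ∈ S)
    (h : GTD S z = {y}) : S.filter (fun w => w ∣ z ∧ w < z) = S.filter (· ∣ y) := by
  have hyG : y ∈ GTD S z := by rw [h]; exact mem_singleton_self y
  obtain ⟨hyS, hylt, hydvd⟩ := gtd_mem hyG
  ext w
  simp only [mem_filter]
  constructor
  · rintro ⟨hwS, hwz, hwlt⟩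
    obtain ⟨y', hy', hwy'⟩ := exists_gtd_dvd S hSpos hz hwS hwz hwlt
    rw [h, mem_singleton] at hy'
    exact ⟨hwS, hy' ▸ hwy'⟩
  · rintro ⟨hwS, hwy⟩
    exact ⟨hwS, hwy.trans hydvd, lt_of_le_of_lt (Nat.le_of_dvd (hSpos y hyS) hwy) hylt⟩

lemma Dset_pair (S : Finset ℕ) (hSpos : ∀ w ∈ S, 0 < w) {z y1 y2 : ℕ} (hz : z ∈ S)
    (h : GTD S z = {y1, y2}) :
    S.filter (fun w => w ∣ z ∧ w < z) = S.filter (· ∣ y1) ∪ S.filter (· ∣ y2) := by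
  have hy1G : y1 ∈ GTD S z := by rw [h]; simp
  have hy2G : y2 ∈ GTD S z := by rw [h]; simp
  obtain ⟨hy1S, hy1lt, hy1dvd⟩ := gtd_mem hy1G
  obtain ⟨hy2S, hy2lt, hy2dvd⟩ := gtd_mem hy2G
  ext w
  simp only [mem_filter, mem_union, mem_filter]
  constructor
  · rintro ⟨hwS, hwz, hwlt⟩
    obtain ⟨y', hy', hwy'⟩ := exists_gtd_dvd S hSpos hz hwS hwz hwlt
    rw [h, mem_insert, mem_singleton] at hy'
    rcases hy' with rfl | rfl
    · exact Or.inl ⟨hwS, hwy'⟩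
    · exact Or.inr ⟨hwS, hwy'⟩
  · rintro (⟨hwS, hwy⟩ | ⟨hwS, hwy⟩)
    · exact ⟨hwS, hwy.trans hy1dvd, lt_of_le_of_lt (Nat.le_of_dvd (hSpos y1 hy1S) hwy) hy1lt⟩
    · exact ⟨hwS, hwy.trans hy2dvd, lt_of_le_of_lt (Nat.le_of_dvd (hSpos y2 hy2S) hwy) hy2lt⟩

lemma Dset_pair_inter (S : Finset ℕ) {y1 y2 : ℕ} :
    S.filter (· ∣ y1) ∩ S.filter (· ∣ y2) = S.filter (· ∣ Nat.gcd y1 y2) := by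
  ext w
  simp only [mem_inter, mem_filter, Nat.dvd_gcd_iff]
  tauto

section MobCases
variable {R : Type*} [CommRing R]

lemma mob_of_empty (S : Finset ℕ) (hSpos : ∀ w ∈ S, 0 < w) (f : ℕ → R)
    {z : ℕ} (hz : z ∈ S) (h : GTD S z = ∅) : mob S f z = f z := by
  rw [mob_eq, Dset_empty S hSpos hz h, Finset.sum_empty, sub_zero]

lemma mob_of_single (S : Finset ℕ) (hSpos : ∀ w ∈ S, 0 < w) (f : ℕ → R)
    {z y : ℕ} (hz : z ∈ S) (h : GTD S z = {y}) :
    mob S f z = f z - f y := by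
  have hyS : y ∈ S := (gtd_mem (by rw [h]; simp : y ∈ GTD S z)).1
  rw [mob_eq, Dset_single S hSpos hz h, sum_mob S hSpos f hyS]

lemma mob_of_pair (S : Finset ℕ) (hSpos : ∀ w ∈ S, 0 < w) (f : ℕ → R)
    {z y1 y2 : ℕ} (hz : z ∈ S) (h : GTD S z = {y1, y2})
    (hgS : Nat.gcd y1 y2 ∈ S) :
    mob S f z = f z - f y1 - f y2 + f (Nat.gcd y1 y2) := by
  have hy1S : y1 ∈ S := (gtd_mem (by rw [h]; simp : y1 ∈ GTD S z)).1
  have hy2S : y2 ∈ S := (gtd_mem (by rw [h]; simp : y2 ∈ GTD S z)).1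
  have hui := Finset.sum_union_inter (s₁ := S.filter (· ∣ y1)) (s₂ := S.filter (· ∣ y2))
    (f := mob S f)
  rw [Dset_pair_inter] at hui
  rw [mob_eq, Dset_pair S hSpos hz h]
  rw [sum_mob S hSpos f hy1S, sum_mob S hSpos f hy2S, sum_mob S hSpos f hgS] at hui
  have : ∑ w ∈ S.filter (· ∣ y1) ∪ S.filter (· ∣ y2), mob S f w
      = f y1 + f y2 - f (Nat.gcd y1 y2) := by linear_combination hui
  rw [this]; ring

end MobCases
/-- KEY: if `y` is a greatest-type divisor of `z` and `d ∈ S` divides `z` but not `y`,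
then `lcm d y = z`. -/
lemma key_lcm (S : Finset ℕ) (hSpos : ∀ w ∈ S, 0 < w) (hG : CondG S) :
    ∀ z, z ∈ S → ∀ y ∈ GTD S z, ∀ d ∈ S, d ∣ z → ¬ d ∣ y → Nat.lcm d y = z := by
  intro z
  induction z using Nat.strong_induction_on with
  | _ z ih =>
    intro hz y hy d hdS hdz hdy
    obtain ⟨hyS, hylt, hydvd⟩ := gtd_mem hy
    by_cases hdz' : d = z
    · subst hdz'
      exact Nat.dvd_antisymm (Nat.lcm_dvd dvd_rfl hydvd) (Nat.dvd_lcm_left _ _)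
    have hdlt : d < z := lt_of_le_of_ne (Nat.le_of_dvd (hSpos z hz) hdz) hdz'
    rcases hG z hz with hcard | ⟨y1, y2, hne, hpair, hlcm, hg1, hg2⟩
    · -- GTD S z = {y}
      have hsing : GTD S z = {y} := by
        apply Finset.eq_singleton_iff_unique_mem.mpr
        exact ⟨hy, fun u hu => Finset.card_le_one.mp hcard u hu y hy⟩
      obtain ⟨y', hy', hdy'⟩ := exists_gtd_dvd S hSpos hz hdS hdz hdlt
      rw [hsing, Finset.mem_singleton] at hy'
      exact absurd (hy' ▸ hdy') hdy
    · obtain ⟨y', hy', hdy'⟩ := exists_gtd_dvd S hSpos hz hdS hdz hdlt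
      have hyin : y = y1 ∨ y = y2 := by
        have := hy; rw [hpair, Finset.mem_insert, Finset.mem_singleton] at this; exact this
      have hy'in : y' = y1 ∨ y' = y2 := by
        rw [hpair, Finset.mem_insert, Finset.mem_singleton] at hy'; exact hy'
      have hy1G : y1 ∈ GTD S z := by rw [hpair]; simp
      have hy2G : y2 ∈ GTD S z := by rw [hpair]; simp
      obtain ⟨hy1S, hy1lt, hy1dvd⟩ := gtd_mem hy1G
      obtain ⟨hy2S, hy2lt, hy2dvd⟩ := gtd_mem hy2G
      set g := Nat.gcd y1 y2 with hg
      rcases hyin with rfl | rfl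
      · -- y = y1, so d ∣ y2
        have hdy2 : d ∣ y2 := by
          rcases hy'in with rfl | rfl
          · exact absurd hdy' hdy
          · exact hdy'
        have hdg : ¬ d ∣ g := fun h => hdy (h.trans (Nat.gcd_dvd_left y y2))
        have hlcmdg : Nat.lcm d g = y2 :=
          ih y2 hy2lt hy2S g hg2 d hdS hdy2 hdg
        apply Nat.dvd_antisymm (Nat.lcm_dvd hdz hydvd)
        have hd_L : d ∣ Nat.lcm d y := Nat.dvd_lcm_left _ _
        have hy1_L : y ∣ Nat.lcm d y := Nat.dvd_lcm_right _ _
        have hg_L : g ∣ Nat.lcm d y := (Nat.gcd_dvd_left y y2).trans hy1_L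
        have hy2_L : y2 ∣ Nat.lcm d y := hlcmdg ▸ Nat.lcm_dvd hd_L hg_L
        exact hlcm ▸ Nat.lcm_dvd hy1_L hy2_L
      · -- y = y2, so d ∣ y1
        have hdy1 : d ∣ y1 := by
          rcases hy'in with rfl | rfl
          · exact hdy'
          · exact absurd hdy' hdy
        have hdg : ¬ d ∣ g := fun h => hdy (h.trans (Nat.gcd_dvd_right y1 y))
        have hlcmdg : Nat.lcm d g = y1 :=
          ih y1 hy1lt hy1S g hg1 d hdS hdy1 hdg
        apply Nat.dvd_antisymm (Nat.lcm_dvd hdz hydvd)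
        have hd_L : d ∣ Nat.lcm d y := Nat.dvd_lcm_left _ _
        have hy2_L : y ∣ Nat.lcm d y := Nat.dvd_lcm_right _ _
        have hg_L : g ∣ Nat.lcm d y := (Nat.gcd_dvd_right y1 y).trans hy2_L
        have hy1_L : y1 ∣ Nat.lcm d y := hlcmdg ▸ Nat.lcm_dvd hd_L hg_L
        exact hlcm ▸ Nat.lcm_dvd hy1_L hy2_L

/-- Solve the triangular system `∑_{w' ∈ S, w ∣ w'} v w' * c w' = T w` downward. -/
def solveAux (S : Finset ℕ) (v T : ℕ → ℤ) (z : ℕ) : ℤ :=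
  (T z - ∑ w ∈ (S.filter fun w => z ∣ w ∧ z < w).attach, v w.1 * solveAux S v T w.1) / v z
termination_by (S.sup id) + 1 - z
decreasing_by
  have h1 := w.2
  simp only [Finset.mem_filter] at h1
  have h2 : w.1 ≤ S.sup id := Finset.le_sup (f := id) h1.1
  omega

lemma solveAux_spec (S : Finset ℕ) (hSpos : ∀ w ∈ S, 0 < w) (v T : ℕ → ℤ)
    (hvT : ∀ w ∈ S, v w ∣ T w)
    (hvv : ∀ w ∈ S, ∀ w' ∈ S, w ∣ w' → v w ∣ v w') {z : ℕ} (hz : z ∈ S) :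
    ∑ w ∈ S.filter (z ∣ ·), v w * solveAux S v T w = T z := by
  have hsplit : S.filter (z ∣ ·) = insert z (S.filter fun w => z ∣ w ∧ z < w) := by
    ext w
    simp only [Finset.mem_filter, Finset.mem_insert]
    constructor
    · rintro ⟨hwS, hzw⟩
      rcases eq_or_lt_of_le (Nat.le_of_dvd (hSpos w hwS) hzw) with h | h
      · exact Or.inl h.symm
      · exact Or.inr ⟨hwS, hzw, h⟩
    · rintro (rfl | ⟨h1, h2, h3⟩)
      · exact ⟨hz, dvd_rfl⟩
      · exact ⟨h1, h2⟩
  have hdvd : v z ∣ T z - ∑ w ∈ S.filter (fun w => z ∣ w ∧ z < w), v w * solveAux S v T w := by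
    apply dvd_sub (hvT z hz)
    apply Finset.dvd_sum
    intro w hw
    simp only [Finset.mem_filter] at hw
    exact (hvv z hz w hw.1 hw.2.1).mul_right _
  have hunf : solveAux S v T z =
      (T z - ∑ w ∈ S.filter (fun w => z ∣ w ∧ z < w), v w * solveAux S v T w) / v z := by
    rw [solveAux,
      Finset.sum_attach (S.filter fun w => z ∣ w ∧ z < w) (fun w => v w * solveAux S v T w)]
  rw [hsplit, Finset.sum_insert (by simp), hunf, Int.mul_ediv_cancel' hdvd]
  ring

lemma solve_system {n : ℕ} (x : Fin n → ℕ) (hinj : Function.Injective x)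
    (S : Finset ℕ) (hS : S = Finset.image x Finset.univ) (hSpos : ∀ w ∈ S, 0 < w)
    (v T : ℕ → ℤ) (hvT : ∀ w ∈ S, v w ∣ T w)
    (hvv : ∀ w ∈ S, ∀ w' ∈ S, w ∣ w' → v w ∣ v w') :
    ∃ c : Fin n → ℤ, ∀ w ∈ S,
      ∑ l ∈ Finset.univ.filter (fun l => w ∣ x l), v (x l) * c l = T w := by
  refine ⟨fun l => solveAux S v T (x l), fun w hw => ?_⟩
  have himg : (Finset.univ.filter (fun l => w ∣ x l)).image x = S.filter (w ∣ ·) := by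
    rw [hS, Finset.filter_image]
  calc ∑ l ∈ Finset.univ.filter (fun l => w ∣ x l), v (x l) * solveAux S v T (x l)
      = ∑ w' ∈ (Finset.univ.filter (fun l => w ∣ x l)).image x, v w' * solveAux S v T w' := by
        rw [Finset.sum_image (fun a _ b _ h => hinj h)]
    _ = T w := by rw [himg]; exact solveAux_spec S hSpos v T hvT hvv hw

lemma lcm_formula {w t d t' : ℕ} (hd : Nat.gcd w t = d) (hdpos : 0 < d)
    (ht' : t = d * t') : Nat.lcm w t = w * t' := by
  have h := Nat.gcd_mul_lcm w t
  rw [hd] at h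
  apply Nat.eq_of_mul_eq_mul_left hdpos
  rw [h, ht']; ring

lemma lcm_of_dvd {w t : ℕ} (h : w ∣ t) : Nat.lcm w t = t :=
  Nat.dvd_antisymm (Nat.lcm_dvd h dvd_rfl) (Nat.dvd_lcm_right w t)

lemma gtd_cases {S : Finset ℕ} (hG : CondG S) {z : ℕ} (hz : z ∈ S) :
    GTD S z = ∅ ∨ (∃ y, GTD S z = {y}) ∨
    (∃ y1 y2, y1 ≠ y2 ∧ GTD S z = {y1, y2} ∧ Nat.lcm y1 y2 = z ∧
      Nat.gcd y1 y2 ∈ GTD S y1 ∧ Nat.gcd y1 y2 ∈ GTD S y2) := by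
  rcases hG z hz with hcard | hpair
  · rcases (GTD S z).eq_empty_or_nonempty with h | ⟨y, hy⟩
    · exact Or.inl h
    · refine Or.inr (Or.inl ⟨y, ?_⟩)
      apply Finset.eq_singleton_iff_unique_mem.mpr
      exact ⟨hy, fun u hu => Finset.card_le_one.mp hcard u hu y hy⟩
  · exact Or.inr (Or.inr hpair)

lemma single_facts (S : Finset ℕ) (hSpos : ∀ w ∈ S, 0 < w)
    (hgcd : ∀ s ∈ S, ∀ t ∈ S, Nat.gcd s t ∈ S) {z y t : ℕ}
    (hz : z ∈ S) (ht : t ∈ S) (h : GTD S z = {y}) :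
    ∃ m, z = y * m ∧ 1 < m ∧
      ((z ∣ t ∧ Nat.lcm z t = t ∧ Nat.lcm y t = t) ∨
       (∃ t', 0 < t' ∧ Nat.lcm z t = z * t' ∧ Nat.lcm y t = y * t')) := by
  have hyG : y ∈ GTD S z := by rw [h]; simp
  obtain ⟨hyS, hylt, hydvd⟩ := gtd_mem hyG
  have hypos : 0 < y := hSpos y hyS
  have hzpos : 0 < z := hSpos z hz
  have htpos : 0 < t := hSpos t ht
  refine ⟨z / y, (Nat.mul_div_cancel' hydvd).symm, ?_, ?_⟩
  · have : y * (z / y) = z := Nat.mul_div_cancel' hydvd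
    by_contra hm
    interval_cases h : z / y <;> omega
  set d := Nat.gcd z t with hd
  have hdpos : 0 < d := Nat.gcd_pos_of_pos_left t hzpos
  have hdz : d ∣ z := Nat.gcd_dvd_left z t
  have hdt : d ∣ t := Nat.gcd_dvd_right z t
  by_cases hdzeq : d = z
  · left
    have hztdvd : z ∣ t := hdzeq ▸ hdt
    exact ⟨hztdvd, lcm_of_dvd hztdvd, lcm_of_dvd (hydvd.trans hztdvd)⟩
  · right
    have hdS : d ∈ S := hgcd z hz t ht
    have hdlt : d < z := lt_of_le_of_ne (Nat.le_of_dvd hzpos hdz) hdzeq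
    obtain ⟨y', hy', hdy'⟩ := exists_gtd_dvd S hSpos hz hdS hdz hdlt
    rw [h, Finset.mem_singleton] at hy'
    have hdy2 : d ∣ y := hy' ▸ hdy'
    have hgyt : Nat.gcd y t = d := by
      apply Nat.dvd_antisymm
      · exact Nat.dvd_gcd ((Nat.gcd_dvd_left y t).trans hydvd) (Nat.gcd_dvd_right y t)
      · exact Nat.dvd_gcd hdy2 hdt
    refine ⟨t / d, ?_, ?_, ?_⟩
    · exact Nat.div_pos (Nat.le_of_dvd htpos hdt) hdpos
    · exact lcm_formula hd.symm hdpos (Nat.mul_div_cancel' hdt).symm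
    · exact lcm_formula hgyt hdpos (Nat.mul_div_cancel' hdt).symm

lemma pair_facts (S : Finset ℕ) (hSpos : ∀ w ∈ S, 0 < w)
    (hgcd : ∀ s ∈ S, ∀ t ∈ S, Nat.gcd s t ∈ S) (hG : CondG S) {z y1 y2 t : ℕ}
    (hz : z ∈ S) (ht : t ∈ S) (hpair : GTD S z = {y1, y2})
    (hlcm : Nat.lcm y1 y2 = z)
    (hg1 : Nat.gcd y1 y2 ∈ GTD S y1) (hg2 : Nat.gcd y1 y2 ∈ GTD S y2) :
    ∃ u1 u2, y1 = Nat.gcd y1 y2 * u1 ∧ y2 = Nat.gcd y1 y2 * u2 ∧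
      z = Nat.gcd y1 y2 * u1 * u2 ∧ 1 < u1 ∧ 1 < u2 ∧
      ((z ∣ t ∧ Nat.lcm z t = t ∧ Nat.lcm y1 t = t ∧ Nat.lcm y2 t = t ∧
          Nat.lcm (Nat.gcd y1 y2) t = t) ∨
       (∃ t', 0 < t' ∧ Nat.lcm z t = z * t' ∧ Nat.lcm y1 t = y1 * t' ∧
          Nat.lcm y2 t = y2 * t' ∧ Nat.lcm (Nat.gcd y1 y2) t = Nat.gcd y1 y2 * t') ∨
       (∃ t', 0 < t' ∧ Nat.lcm z t = z * t' ∧ Nat.lcm y1 t = y1 * t' ∧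
          Nat.lcm y2 t = z * t' ∧ Nat.lcm (Nat.gcd y1 y2) t = y1 * t') ∨
       (∃ t', 0 < t' ∧ Nat.lcm z t = z * t' ∧ Nat.lcm y1 t = z * t' ∧
          Nat.lcm y2 t = y2 * t' ∧ Nat.lcm (Nat.gcd y1 y2) t = y2 * t')) := by
  have hy1G : y1 ∈ GTD S z := by rw [hpair]; simp
  have hy2G : y2 ∈ GTD S z := by rw [hpair]; simp
  obtain ⟨hy1S, hy1lt, hy1dvd⟩ := gtd_mem hy1G
  obtain ⟨hy2S, hy2lt, hy2dvd⟩ := gtd_mem hy2G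
  set g := Nat.gcd y1 y2 with hgdef
  obtain ⟨hgS, hglt1, hgdvd1⟩ := gtd_mem hg1
  have hglt2 : g < y2 := (gtd_mem hg2).2.1
  have hgdvd2 : g ∣ y2 := (gtd_mem hg2).2.2
  have hzpos : 0 < z := hSpos z hz
  have htpos : 0 < t := hSpos t ht
  have hy1pos : 0 < y1 := hSpos y1 hy1S
  have hy2pos : 0 < y2 := hSpos y2 hy2S
  have hgpos : 0 < g := hSpos g hgS
  set u1 := y1 / g with hu1def
  set u2 := y2 / g with hu2def
  have hy1eq : y1 = g * u1 := (Nat.mul_div_cancel' hgdvd1).symm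
  have hy2eq : y2 = g * u2 := (Nat.mul_div_cancel' hgdvd2).symm
  have hu1gt : 1 < u1 := by nlinarith [hy1eq, hglt1, hgpos]
  have hu2gt : 1 < u2 := by nlinarith [hy2eq, hglt2, hgpos]
  have hzeq : z = g * u1 * u2 := by
    have h := Nat.gcd_mul_lcm y1 y2
    rw [hlcm, ← hgdef] at h
    -- h : g * z = y1 * y2
    have : g * z = g * (g * u1 * u2) := by rw [h, hy1eq, hy2eq]; ring
    exact Nat.eq_of_mul_eq_mul_left hgpos this
  refine ⟨u1, u2, hy1eq, hy2eq, hzeq, hu1gt, hu2gt, ?_⟩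
  set d := Nat.gcd z t with hd
  have hdpos : 0 < d := Nat.gcd_pos_of_pos_left t hzpos
  have hdz : d ∣ z := Nat.gcd_dvd_left z t
  have hdt : d ∣ t := Nat.gcd_dvd_right z t
  by_cases hdzeq : d = z
  · left
    have hztdvd : z ∣ t := hdzeq ▸ hdt
    exact ⟨hztdvd, lcm_of_dvd hztdvd, lcm_of_dvd (hy1dvd.trans hztdvd),
      lcm_of_dvd (hy2dvd.trans hztdvd), lcm_of_dvd ((hgdvd1.trans hy1dvd).trans hztdvd)⟩
  have hdS : d ∈ S := hgcd z hz t ht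
  have hdlt : d < z := lt_of_le_of_ne (Nat.le_of_dvd hzpos hdz) hdzeq
  have hdy12 : d ∣ y1 ∨ d ∣ y2 := by
    obtain ⟨y', hy', hdy'⟩ := exists_gtd_dvd S hSpos hz hdS hdz hdlt
    rw [hpair, Finset.mem_insert, Finset.mem_singleton] at hy'
    rcases hy' with rfl | rfl
    · exact Or.inl hdy'
    · exact Or.inr hdy'
  set t' := t / d with ht'def
  have hteq : t = d * t' := (Nat.mul_div_cancel' hdt).symm
  have ht'pos : 0 < t' := Nat.div_pos (Nat.le_of_dvd htpos hdt) hdpos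
  have hlcmzt : Nat.lcm z t = z * t' := lcm_formula hd.symm hdpos hteq
  by_cases hdy1 : d ∣ y1 <;> by_cases hdy2 : d ∣ y2
  · -- d ∣ g : generic case
    right; left
    have hdg : d ∣ g := Nat.dvd_gcd hdy1 hdy2
    have h1 : Nat.gcd y1 t = d := Nat.dvd_antisymm
      (Nat.dvd_gcd ((Nat.gcd_dvd_left y1 t).trans hy1dvd) (Nat.gcd_dvd_right y1 t))
      (Nat.dvd_gcd hdy1 hdt)
    have h2 : Nat.gcd y2 t = d := Nat.dvd_antisymm
      (Nat.dvd_gcd ((Nat.gcd_dvd_left y2 t).trans hy2dvd) (Nat.gcd_dvd_right y2 t))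
      (Nat.dvd_gcd hdy2 hdt)
    have h3 : Nat.gcd g t = d := Nat.dvd_antisymm
      (Nat.dvd_gcd (((Nat.gcd_dvd_left g t).trans hgdvd1).trans hy1dvd) (Nat.gcd_dvd_right g t))
      (Nat.dvd_gcd hdg hdt)
    exact ⟨t', ht'pos, hlcmzt, lcm_formula h1 hdpos hteq, lcm_formula h2 hdpos hteq,
      lcm_formula h3 hdpos hteq⟩
  · -- d ∣ y1, ¬ d ∣ y2
    right; right; left
    have hkey : Nat.lcm d y2 = z := key_lcm S hSpos hG z hz y2 hy2G d hdS hdz hdy2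
    set e := Nat.gcd y2 t with hedef
    have hed : e ∣ d := Nat.dvd_gcd ((Nat.gcd_dvd_left y2 t).trans hy2dvd) (Nat.gcd_dvd_right y2 t)
    have hepos : 0 < e := Nat.gcd_pos_of_pos_left t hy2pos
    have hgdy2 : Nat.gcd d y2 = e := by
      apply Nat.dvd_antisymm
      · exact Nat.dvd_gcd (Nat.gcd_dvd_right d y2) ((Nat.gcd_dvd_left d y2).trans hdt)
      · exact Nat.dvd_gcd hed (Nat.gcd_dvd_left y2 t)
    have hdeu1 : d = e * u1 := by
      have h := Nat.gcd_mul_lcm d y2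
      rw [hkey, hgdy2] at h
      -- h : e * z = d * y2
      have h2 : (y2 * g) * d = (y2 * g) * (e * u1) := by
        rw [hzeq] at h
        rw [hy2eq] at h ⊢
        calc (g * u2 * g) * d = g * (d * (g * u2)) := by ring
          _ = g * (e * (g * u1 * u2)) := by rw [h]
          _ = (g * u2 * g) * (e * u1) := by ring
      exact Nat.eq_of_mul_eq_mul_left (by positivity) h2
    have hgy1t : Nat.gcd y1 t = d := Nat.dvd_antisymm
      (Nat.dvd_gcd ((Nat.gcd_dvd_left y1 t).trans hy1dvd) (Nat.gcd_dvd_right y1 t))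
      (Nat.dvd_gcd hdy1 hdt)
    have hgegt : Nat.gcd g t = e := by
      apply Nat.dvd_antisymm
      · exact Nat.dvd_gcd ((Nat.gcd_dvd_left g t).trans hgdvd2) (Nat.gcd_dvd_right g t)
      · refine Nat.dvd_gcd (Nat.dvd_gcd ((hed.trans hdy1)) (Nat.gcd_dvd_left y2 t))
          (Nat.gcd_dvd_right y2 t)
    have hteq2 : t = e * (u1 * t') := by rw [hteq, hdeu1]; ring
    refine ⟨t', ht'pos, hlcmzt, lcm_formula hgy1t hdpos hteq, ?_, ?_⟩
    · rw [lcm_formula hedef.symm hepos hteq2, hy2eq, hzeq]; ring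
    · rw [lcm_formula hgegt hepos hteq2, hy1eq]; ring
  · -- d ∣ y2, ¬ d ∣ y1
    right; right; right
    have hkey : Nat.lcm d y1 = z := key_lcm S hSpos hG z hz y1 hy1G d hdS hdz hdy1
    set e := Nat.gcd y1 t with hedef
    have hed : e ∣ d := Nat.dvd_gcd ((Nat.gcd_dvd_left y1 t).trans hy1dvd) (Nat.gcd_dvd_right y1 t)
    have hepos : 0 < e := Nat.gcd_pos_of_pos_left t hy1pos
    have hgdy1 : Nat.gcd d y1 = e := by
      apply Nat.dvd_antisymm
      · exact Nat.dvd_gcd (Nat.gcd_dvd_right d y1) ((Nat.gcd_dvd_left d y1).trans hdt)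
      · exact Nat.dvd_gcd hed (Nat.gcd_dvd_left y1 t)
    have hdeu2 : d = e * u2 := by
      have h := Nat.gcd_mul_lcm d y1
      rw [hkey, hgdy1] at h
      have h2 : (y1 * g) * d = (y1 * g) * (e * u2) := by
        rw [hzeq] at h
        rw [hy1eq] at h ⊢
        calc (g * u1 * g) * d = g * (d * (g * u1)) := by ring
          _ = g * (e * (g * u1 * u2)) := by rw [h]
          _ = (g * u1 * g) * (e * u2) := by ring
      exact Nat.eq_of_mul_eq_mul_left (by positivity) h2
    have hgy2t : Nat.gcd y2 t = d := Nat.dvd_antisymm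
      (Nat.dvd_gcd ((Nat.gcd_dvd_left y2 t).trans hy2dvd) (Nat.gcd_dvd_right y2 t))
      (Nat.dvd_gcd hdy2 hdt)
    have hgegt : Nat.gcd g t = e := by
      apply Nat.dvd_antisymm
      · exact Nat.dvd_gcd ((Nat.gcd_dvd_left g t).trans hgdvd1) (Nat.gcd_dvd_right g t)
      · exact Nat.dvd_gcd (Nat.dvd_gcd (Nat.gcd_dvd_left y1 t) (hed.trans hdy2))
          (Nat.gcd_dvd_right y1 t)
    have hteq2 : t = e * (u2 * t') := by rw [hteq, hdeu2]; ring
    refine ⟨t', ht'pos, hlcmzt, ?_, lcm_formula hgy2t hdpos hteq, ?_⟩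
    · rw [lcm_formula hedef.symm hepos hteq2, hy1eq, hzeq]; ring
    · rw [lcm_formula hgegt hepos hteq2, hy2eq]; ring
  · -- contradiction
    rcases hdy12 with h | h
    · exact absurd h hdy1
    · exact absurd h hdy2

lemma int_pow_sub_dvd {X Y : ℤ} {a b : ℕ} (hab : a ∣ b) : X ^ a - Y ^ a ∣ X ^ b - Y ^ b := by
  obtain ⟨c, rfl⟩ := hab
  rw [pow_mul, pow_mul]
  exact sub_dvd_pow_sub_pow _ _ c

lemma int_pow_sub_one_dvd {X : ℤ} {a b : ℕ} (hab : a ∣ b) : X ^ a - 1 ∣ X ^ b - 1 := by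
  have := int_pow_sub_dvd (X := X) (Y := 1) hab
  simpa using this

/-- D1: `F_a(z) ∣ F_b(z)`. -/
lemma mobpow_dvd (S : Finset ℕ) (hSpos : ∀ w ∈ S, 0 < w)
    (hgcd : ∀ s ∈ S, ∀ t ∈ S, Nat.gcd s t ∈ S) (hG : CondG S)
    {a b : ℕ} (hb : 0 < b) (hab : a ∣ b) {z : ℕ} (hz : z ∈ S) :
    mob S (fun w => ((w : ℤ)) ^ a) z ∣ mob S (fun w => ((w : ℤ)) ^ b) z := by
  have hle : a ≤ b := Nat.le_of_dvd hb hab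
  rcases gtd_cases hG hz with hemp | ⟨y, hsing⟩ | ⟨y1, y2, hne, hpair, hlcm, hg1, hg2⟩
  · rw [mob_of_empty S hSpos _ hz hemp, mob_of_empty S hSpos _ hz hemp]
    exact pow_dvd_pow _ hle
  · rw [mob_of_single S hSpos _ hz hsing, mob_of_single S hSpos _ hz hsing]
    exact int_pow_sub_dvd hab
  · have hgS : Nat.gcd y1 y2 ∈ S := (gtd_mem hg1).1
    rw [mob_of_pair S hSpos _ hz hpair hgS, mob_of_pair S hSpos _ hz hpair hgS]
    obtain ⟨u1, u2, hy1eq, hy2eq, hzeq, hu1, hu2, -⟩ :=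
      pair_facts S hSpos hgcd hG hz hz hpair hlcm hg1 hg2
    set g := Nat.gcd y1 y2
    have e1 : (y1 : ℤ) = (g : ℤ) * u1 := by exact_mod_cast hy1eq
    have e2 : (y2 : ℤ) = (g : ℤ) * u2 := by exact_mod_cast hy2eq
    have e3 : (z : ℤ) = (g : ℤ) * u1 * u2 := by exact_mod_cast hzeq
    have hfa : ∀ m : ℕ, (z:ℤ)^m - (y1:ℤ)^m - (y2:ℤ)^m + (g:ℤ)^m
        = (g:ℤ)^m * (((u1:ℤ)^m - 1) * ((u2:ℤ)^m - 1)) := by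
      intro m
      rw [e1, e2, e3]
      ring
    rw [hfa a, hfa b]
    exact mul_dvd_mul (pow_dvd_pow _ hle)
      (mul_dvd_mul (int_pow_sub_one_dvd hab) (int_pow_sub_one_dvd hab))

/-- D2: `F_a(z) ∣` the transform of `w ↦ lcm(w,t)^b`. -/
lemma mob_lcm_dvd (S : Finset ℕ) (hSpos : ∀ w ∈ S, 0 < w)
    (hgcd : ∀ s ∈ S, ∀ t ∈ S, Nat.gcd s t ∈ S) (hG : CondG S)
    {a b : ℕ} (hb : 0 < b) (hab : a ∣ b) {z t : ℕ} (hz : z ∈ S) (ht : t ∈ S) :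
    mob S (fun w => ((w : ℤ)) ^ a) z ∣ mob S (fun w => ((Nat.lcm w t : ℤ)) ^ b) z := by
  have hle : a ≤ b := Nat.le_of_dvd hb hab
  rcases gtd_cases hG hz with hemp | ⟨y, hsing⟩ | ⟨y1, y2, hne, hpair, hlcm, hg1, hg2⟩
  · rw [mob_of_empty S hSpos _ hz hemp, mob_of_empty S hSpos _ hz hemp]
    have h1 : (z : ℤ) ∣ (Nat.lcm z t : ℤ) := Int.natCast_dvd_natCast.mpr (Nat.dvd_lcm_left z t)
    exact dvd_trans (pow_dvd_pow_of_dvd h1 a) (pow_dvd_pow _ hle)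
  · rw [mob_of_single S hSpos _ hz hsing, mob_of_single S hSpos _ hz hsing]
    obtain ⟨m, hzeq, hm, hcases⟩ := single_facts S hSpos hgcd hz ht hsing
    rcases hcases with ⟨hzt, hl1, hl2⟩ | ⟨t', ht', hl1, hl2⟩
    · rw [hl1, hl2]; simp
    · rw [hl1, hl2]
      have : ((z * t' : ℕ) : ℤ)^b - ((y * t' : ℕ) : ℤ)^b = (t':ℤ)^b * ((z:ℤ)^b - (y:ℤ)^b) := by
        push_cast; ring
      rw [this]
      exact (int_pow_sub_dvd hab).mul_left _
  · have hgS : Nat.gcd y1 y2 ∈ S := (gtd_mem hg1).1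
    rw [mob_of_pair S hSpos _ hz hpair hgS, mob_of_pair S hSpos _ hz hpair hgS]
    obtain ⟨u1, u2, hy1eq, hy2eq, hzeq, hu1, hu2, hcases⟩ :=
      pair_facts S hSpos hgcd hG hz ht hpair hlcm hg1 hg2
    set g := Nat.gcd y1 y2
    have e1 : (y1 : ℤ) = (g : ℤ) * u1 := by exact_mod_cast hy1eq
    have e2 : (y2 : ℤ) = (g : ℤ) * u2 := by exact_mod_cast hy2eq
    have e3 : (z : ℤ) = (g : ℤ) * u1 * u2 := by exact_mod_cast hzeq
    have hfa : (z:ℤ)^a - (y1:ℤ)^a - (y2:ℤ)^a + (g:ℤ)^a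
        = (g:ℤ)^a * (((u1:ℤ)^a - 1) * ((u2:ℤ)^a - 1)) := by
      rw [e1, e2, e3]; ring
    rcases hcases with ⟨hzt, hl1, hl2, hl3, hl4⟩ | ⟨t', ht', hl1, hl2, hl3, hl4⟩ |
      ⟨t', ht', hl1, hl2, hl3, hl4⟩ | ⟨t', ht', hl1, hl2, hl3, hl4⟩
    · rw [hl1, hl2, hl3, hl4]; simp
    · rw [hl1, hl2, hl3, hl4, hfa]
      have : ((z * t' : ℕ) : ℤ)^b - ((y1 * t' : ℕ) : ℤ)^b - ((y2 * t' : ℕ):ℤ)^b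
          + ((g * t' : ℕ):ℤ)^b
          = ((g:ℤ)^b * (((u1:ℤ)^b - 1) * ((u2:ℤ)^b - 1))) * (t':ℤ)^b := by
        push_cast
        rw [e1, e2, e3]
        ring
      rw [this]
      exact Dvd.dvd.mul_right (mul_dvd_mul (pow_dvd_pow _ hle)
        (mul_dvd_mul (int_pow_sub_one_dvd hab) (int_pow_sub_one_dvd hab))) _
    · rw [hl1, hl2, hl3, hl4]
      have : ((z * t' : ℕ) : ℤ)^b - ((y1 * t' : ℕ) : ℤ)^b - ((z * t' : ℕ):ℤ)^b
          + ((y1 * t' : ℕ):ℤ)^b = 0 := by push_cast; ring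
      rw [this]
      exact dvd_zero _
    · rw [hl1, hl2, hl3, hl4]
      have : ((z * t' : ℕ) : ℤ)^b - ((z * t' : ℕ) : ℤ)^b - ((y2 * t' : ℕ):ℤ)^b
          + ((y2 * t' : ℕ):ℤ)^b = 0 := by push_cast; ring
      rw [this]
      exact dvd_zero _

/-- D3: the transform of `w ↦ lcm(w,t)^b / w^a` equals `R_a(z) * T` with `z^a ∣ T`. -/
lemma mob_ratio (S : Finset ℕ) (hSpos : ∀ w ∈ S, 0 < w)
    (hgcd : ∀ s ∈ S, ∀ t ∈ S, Nat.gcd s t ∈ S) (hG : CondG S)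
    {a b : ℕ} (ha : 0 < a) (hb : 0 < b) (hab : a ∣ b)
    {z t : ℕ} (hz : z ∈ S) (ht : t ∈ S) :
    ∃ T : ℤ, ((z : ℤ)) ^ a ∣ T ∧
      mob S (fun w => ((Nat.lcm w t : ℚ)) ^ b * (((w : ℚ)) ^ a)⁻¹) z
        = mob S (fun w => (((w : ℚ)) ^ a)⁻¹) z * (T : ℚ) := by
  obtain ⟨c, hbc⟩ := hab
  have hc : 0 < c := by
    rcases Nat.eq_zero_or_pos c with rfl | h
    · omega
    · exact h
  have hbsum : b = a + a * (c - 1) := by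
    rw [hbc]; cases c with
    | zero => omega
    | succ k => simp [Nat.mul_succ, Nat.succ_sub_one]; ring
  have hgeom : ∀ u : ℕ, ((u:ℚ)^a - 1) *
      (∑ i ∈ Finset.range (c-1), (((u:ℚ))^a)^i) = (u:ℚ)^(a*(c-1)) - 1 := by
    intro u
    have h := geom_sum_mul ((u:ℚ)^a) (c-1)
    rw [pow_mul]
    linear_combination h
  have hzpos : 0 < z := hSpos z hz
  have htpos : 0 < t := hSpos t ht
  have hzq : ((z:ℚ))^a ≠ 0 := by positivity
  rcases gtd_cases hG hz with hemp | ⟨y, hsing⟩ | ⟨y1, y2, hne, hpair, hlcm, hg1, hg2⟩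
  · refine ⟨(Nat.lcm z t : ℤ)^b, ?_, ?_⟩
    · calc ((z:ℤ))^a ∣ ((Nat.lcm z t : ℤ))^a :=
            pow_dvd_pow_of_dvd (Int.natCast_dvd_natCast.mpr (Nat.dvd_lcm_left z t)) a
        _ ∣ ((Nat.lcm z t : ℤ))^b := pow_dvd_pow _ (Nat.le_of_dvd hb ⟨c, hbc⟩)
    · rw [mob_of_empty S hSpos _ hz hemp, mob_of_empty S hSpos _ hz hemp]
      push_cast
      ring
  · -- single GTD
    obtain ⟨m, hzeq, hm, hcases⟩ := single_facts S hSpos hgcd hz ht hsing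
    have hyS : y ∈ S := (gtd_mem (by rw [hsing]; simp : y ∈ GTD S z)).1
    have hypos : 0 < y := hSpos y hyS
    have hmpos : 0 < m := by omega
    have hyq : ((y:ℚ))^a ≠ 0 := by positivity
    have hmq : ((m:ℚ))^a ≠ 0 := by positivity
    have hzyq : ((z:ℚ)) = (y:ℚ) * (m:ℚ) := by exact_mod_cast hzeq
    rcases hcases with ⟨hzt, hl1, hl2⟩ | ⟨t', ht', hl1, hl2⟩
    · refine ⟨(t:ℤ)^b, ?_, ?_⟩
      · calc ((z:ℤ))^a ∣ ((t:ℤ))^a := pow_dvd_pow_of_dvd (Int.natCast_dvd_natCast.mpr hzt) a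
          _ ∣ ((t:ℤ))^b := pow_dvd_pow _ (Nat.le_of_dvd hb ⟨c, hbc⟩)
      · rw [mob_of_single S hSpos _ hz hsing, mob_of_single S hSpos _ hz hsing, hl1, hl2]
        push_cast
        ring
    · have hP := hgeom m
      refine ⟨-((z:ℤ)^a * ((t':ℤ)^b * (y:ℤ)^(a*(c-1)) *
        (∑ i ∈ Finset.range (c-1), ((m:ℤ)^a)^i))), (dvd_mul_right _ _).neg_right, ?_⟩
      rw [mob_of_single S hSpos _ hz hsing, mob_of_single S hSpos _ hz hsing, hl1, hl2]
      push_cast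
      rw [hzyq, hbsum]
      simp only [pow_add]
      field_simp
      linear_combination (-(((y:ℚ))^(a*2) * ((y:ℚ))^(a*(c-1)) * ((m:ℚ))^a *
        ((t':ℚ))^a * ((t':ℚ))^(a*(c-1)))) * hP
  · -- pair GTD
    have hgS : Nat.gcd y1 y2 ∈ S := (gtd_mem hg1).1
    obtain ⟨u1, u2, hy1eq, hy2eq, hzeq, hu1, hu2, hcases⟩ :=
      pair_facts S hSpos hgcd hG hz ht hpair hlcm hg1 hg2
    set g := Nat.gcd y1 y2 with hgdef
    have hy1S : y1 ∈ S := (gtd_mem (by rw [hpair]; simp : y1 ∈ GTD S z)).1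
    have hy2S : y2 ∈ S := (gtd_mem (by rw [hpair]; simp : y2 ∈ GTD S z)).1
    have hy1pos : 0 < y1 := hSpos y1 hy1S
    have hy2pos : 0 < y2 := hSpos y2 hy2S
    have hgpos : 0 < g := hSpos g hgS
    have hu1pos : 0 < u1 := by omega
    have hu2pos : 0 < u2 := by omega
    have hy1q : ((y1:ℚ)) = (g:ℚ) * (u1:ℚ) := by exact_mod_cast hy1eq
    have hy2q : ((y2:ℚ)) = (g:ℚ) * (u2:ℚ) := by exact_mod_cast hy2eq
    have hzq2 : ((z:ℚ)) = (g:ℚ) * (u1:ℚ) * (u2:ℚ) := by exact_mod_cast hzeq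
    have hgq : ((g:ℚ))^a ≠ 0 := by positivity
    have hu1q : ((u1:ℚ))^a ≠ 0 := by positivity
    have hu2q : ((u2:ℚ))^a ≠ 0 := by positivity
    have hP1 := hgeom u1
    have hP2 := hgeom u2
    rcases hcases with ⟨hzt, hl1, hl2, hl3, hl4⟩ | ⟨t', ht', hl1, hl2, hl3, hl4⟩ |
      ⟨t', ht', hl1, hl2, hl3, hl4⟩ | ⟨t', ht', hl1, hl2, hl3, hl4⟩
    · refine ⟨(t:ℤ)^b, ?_, ?_⟩
      · calc ((z:ℤ))^a ∣ ((t:ℤ))^a := pow_dvd_pow_of_dvd (Int.natCast_dvd_natCast.mpr hzt) a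
          _ ∣ ((t:ℤ))^b := pow_dvd_pow _ (Nat.le_of_dvd hb ⟨c, hbc⟩)
      · rw [mob_of_pair S hSpos _ hz hpair hgS, mob_of_pair S hSpos _ hz hpair hgS,
          hl1, hl2, hl3, hl4]
        push_cast
        ring
    · refine ⟨(z:ℤ)^a * ((t':ℤ)^b * (g:ℤ)^(a*(c-1)) *
        (∑ i ∈ Finset.range (c-1), ((u1:ℤ)^a)^i) *
        (∑ i ∈ Finset.range (c-1), ((u2:ℤ)^a)^i)), dvd_mul_right _ _, ?_⟩
      rw [mob_of_pair S hSpos _ hz hpair hgS, mob_of_pair S hSpos _ hz hpair hgS,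
        hl1, hl2, hl3, hl4]
      push_cast
      rw [hy1q, hy2q, hzq2, hbsum]
      simp only [pow_add]
      field_simp
      linear_combination
        (-(((g:ℚ))^(a*4) * ((g:ℚ))^(a*(c-1)) * ((u1:ℚ))^(a*2) * ((u2:ℚ))^(a*2) *
          ((t':ℚ))^a * ((t':ℚ))^(a*(c-1))) * (((u1:ℚ))^(a*(c-1)) - 1)) * hP2 +
        (-(((g:ℚ))^(a*4) * ((g:ℚ))^(a*(c-1)) * ((u1:ℚ))^(a*2) * ((u2:ℚ))^(a*2) *
          ((t':ℚ))^a * ((t':ℚ))^(a*(c-1))) * (((u2:ℚ))^a - 1) *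
          (∑ i ∈ Finset.range (c-1), (((u2:ℚ))^a)^i)) * hP1
    · refine ⟨-((z:ℤ)^a * ((t':ℤ)^b * (y1:ℤ)^(a*(c-1)) *
        (∑ i ∈ Finset.range (c-1), ((u2:ℤ)^a)^i))), (dvd_mul_right _ _).neg_right, ?_⟩
      rw [mob_of_pair S hSpos _ hz hpair hgS, mob_of_pair S hSpos _ hz hpair hgS,
        hl1, hl2, hl3, hl4]
      push_cast
      rw [hy1q, hy2q, hzq2, hbsum]
      simp only [pow_add]
      field_simp
      linear_combination
        ((((g:ℚ))^(a*4) * ((g:ℚ))^(a*(c-1)) * ((u1:ℚ))^(a*2) * ((u1:ℚ))^(a*(c-1)) *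
          ((u2:ℚ))^(a*2) * ((t':ℚ))^a * ((t':ℚ))^(a*(c-1))) * (((u1:ℚ))^a - 1)) * hP2
    · refine ⟨-((z:ℤ)^a * ((t':ℤ)^b * (y2:ℤ)^(a*(c-1)) *
        (∑ i ∈ Finset.range (c-1), ((u1:ℤ)^a)^i))), (dvd_mul_right _ _).neg_right, ?_⟩
      rw [mob_of_pair S hSpos _ hz hpair hgS, mob_of_pair S hSpos _ hz hpair hgS,
        hl1, hl2, hl3, hl4]
      push_cast
      rw [hy1q, hy2q, hzq2, hbsum]
      simp only [pow_add]
      field_simp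
      linear_combination
        ((((g:ℚ))^(a*4) * ((g:ℚ))^(a*(c-1)) * ((u2:ℚ))^(a*2) * ((u2:ℚ))^(a*(c-1)) *
          ((u1:ℚ))^(a*2) * ((t':ℚ))^a * ((t':ℚ))^(a*(c-1))) * (((u2:ℚ))^a - 1)) * hP1

lemma swap_sum {R : Type*} [CommRing R] {n : ℕ} (x : Fin n → ℕ) (S : Finset ℕ)
    (G : ℕ → R) (c : Fin n → R) (i : Fin n) :
    ∑ l, (∑ w ∈ S.filter (· ∣ Nat.gcd (x i) (x l)), G w) * c l
      = ∑ w ∈ S.filter (· ∣ x i), G w * (∑ l ∈ Finset.univ.filter (fun l => w ∣ x l), c l) := by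
  have key : ∀ l, (∑ w ∈ S.filter (· ∣ Nat.gcd (x i) (x l)), G w) * c l
      = ∑ w ∈ S, (if w ∣ x i then (if w ∣ x l then G w * c l else 0) else 0) := by
    intro l
    rw [Finset.sum_filter, Finset.sum_mul]
    apply Finset.sum_congr rfl
    intro w _
    have hiff : w ∣ Nat.gcd (x i) (x l) ↔ w ∣ x i ∧ w ∣ x l := by
      constructor
      · intro h
        exact ⟨h.trans (Nat.gcd_dvd_left _ _), h.trans (Nat.gcd_dvd_right _ _)⟩
      · rintro ⟨h1, h2⟩
        exact Nat.dvd_gcd h1 h2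
    by_cases h1 : w ∣ x i
    · by_cases h2 : w ∣ x l
      · simp [hiff.mpr ⟨h1, h2⟩, h1, h2]
      · have hng : ¬ w ∣ Nat.gcd (x i) (x l) := fun h => h2 (hiff.mp h).2
        simp [hng, h1, h2]
    · have hng : ¬ w ∣ Nat.gcd (x i) (x l) := fun h => h1 (hiff.mp h).1
      simp [hng, h1]
  calc ∑ l, (∑ w ∈ S.filter (· ∣ Nat.gcd (x i) (x l)), G w) * c l
      = ∑ l, ∑ w ∈ S, (if w ∣ x i then (if w ∣ x l then G w * c l else 0) else 0) :=
        Finset.sum_congr rfl (fun l _ => key l)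
    _ = ∑ w ∈ S, ∑ l, (if w ∣ x i then (if w ∣ x l then G w * c l else 0) else 0) :=
        Finset.sum_comm
    _ = ∑ w ∈ S.filter (· ∣ x i), G w * (∑ l ∈ Finset.univ.filter (fun l => w ∣ x l), c l) := by
        rw [Finset.sum_filter]
        apply Finset.sum_congr rfl
        intro w _
        by_cases h1 : w ∣ x i
        · simp only [h1, if_true]
          rw [Finset.mul_sum, Finset.sum_filter]
        · simp [h1]

lemma memS {n : ℕ} (x : Fin n → ℕ) (S : Finset ℕ)
    (hS : S = Finset.image x Finset.univ) (i : Fin n) : x i ∈ S := by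
  rw [hS]; exact Finset.mem_image_of_mem x (Finset.mem_univ i)

/-- Column existence for `(S^a) ∣ (S^b)`. -/
lemma colA {n : ℕ} (x : Fin n → ℕ) (hinj : Function.Injective x)
    (S : Finset ℕ) (hS : S = Finset.image x Finset.univ) (hSpos : ∀ w ∈ S, 0 < w)
    (hgcd : ∀ s ∈ S, ∀ t ∈ S, Nat.gcd s t ∈ S) (hG : CondG S)
    {a b : ℕ} (hb : 0 < b) (hab : a ∣ b) (j : Fin n) : ∃ c : Fin n → ℤ,
    ∀ i, ∑ l, ((Nat.gcd (x i) (x l) : ℤ)) ^ a * c l = ((Nat.gcd (x i) (x j) : ℤ)) ^ b := by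
  classical
  set Fa := mob S (fun w => ((w : ℤ)) ^ a) with hFa
  set Fb := mob S (fun w => ((w : ℤ)) ^ b) with hFb
  set q : ℕ → ℤ := fun w => if w ∣ x j then Fb w / Fa w else 0 with hq
  have hFaq : ∀ w ∈ S, Fa w * q w = if w ∣ x j then Fb w else 0 := by
    intro w hw
    by_cases h : w ∣ x j <;> simp only [hq, h, if_true, if_false, mul_zero]
    exact Int.mul_ediv_cancel' (mobpow_dvd S hSpos hgcd hG hb hab hw)
  obtain ⟨c, hc⟩ := solve_system x hinj S hS hSpos (fun _ => 1) q
    (fun w _ => one_dvd _) (fun _ _ _ _ _ => dvd_refl 1)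
  refine ⟨c, fun i => ?_⟩
  have hgcdS : ∀ l : Fin n, Nat.gcd (x i) (x l) ∈ S :=
    fun l => hgcd _ (memS x S hS i) _ (memS x S hS l)
  calc ∑ l, ((Nat.gcd (x i) (x l) : ℤ)) ^ a * c l
      = ∑ l, (∑ w ∈ S.filter (· ∣ Nat.gcd (x i) (x l)), Fa w) * c l := by
        apply Finset.sum_congr rfl
        intro l _
        rw [sum_mob S hSpos _ (hgcdS l)]
    _ = ∑ w ∈ S.filter (· ∣ x i), Fa w * (∑ l ∈ Finset.univ.filter (fun l => w ∣ x l), c l) :=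
        swap_sum x S Fa c i
    _ = ∑ w ∈ S.filter (· ∣ x i), (if w ∣ x j then Fb w else 0) := by
        apply Finset.sum_congr rfl
        intro w hw
        have hwS : w ∈ S := (Finset.mem_filter.mp hw).1
        have := hc w hwS
        simp only [one_mul] at this
        rw [this, hFaq w hwS]
    _ = ∑ w ∈ S.filter (· ∣ Nat.gcd (x i) (x j)), Fb w := by
        rw [← Finset.sum_filter, Finset.filter_filter]
        apply Finset.sum_congr _ (fun _ _ => rfl)
        apply Finset.filter_congr
        intro w _
        constructor
        · rintro ⟨h1, h2⟩
          exact Nat.dvd_gcd h1 h2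
        · intro h
          exact ⟨h.trans (Nat.gcd_dvd_left _ _), h.trans (Nat.gcd_dvd_right _ _)⟩
    _ = ((Nat.gcd (x i) (x j) : ℤ)) ^ b := sum_mob S hSpos _ (hgcdS j)

/-- Column existence for `(S^a) ∣ [S^b]`. -/
lemma colB {n : ℕ} (x : Fin n → ℕ) (hinj : Function.Injective x)
    (S : Finset ℕ) (hS : S = Finset.image x Finset.univ) (hSpos : ∀ w ∈ S, 0 < w)
    (hgcd : ∀ s ∈ S, ∀ t ∈ S, Nat.gcd s t ∈ S) (hG : CondG S)
    {a b : ℕ} (hb : 0 < b) (hab : a ∣ b) (j : Fin n) : ∃ c : Fin n → ℤ,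
    ∀ i, ∑ l, ((Nat.gcd (x i) (x l) : ℤ)) ^ a * c l = ((Nat.lcm (x i) (x j) : ℤ)) ^ b := by
  classical
  set Fa := mob S (fun w => ((w : ℤ)) ^ a) with hFa
  set Lb := mob S (fun w => ((Nat.lcm w (x j) : ℤ)) ^ b) with hLb
  set q : ℕ → ℤ := fun w => Lb w / Fa w with hq
  have hFaq : ∀ w ∈ S, Fa w * q w = Lb w := fun w hw =>
    Int.mul_ediv_cancel' (mob_lcm_dvd S hSpos hgcd hG hb hab hw (memS x S hS j))
  obtain ⟨c, hc⟩ := solve_system x hinj S hS hSpos (fun _ => 1) q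
    (fun w _ => one_dvd _) (fun _ _ _ _ _ => dvd_refl 1)
  refine ⟨c, fun i => ?_⟩
  have hgcdS : ∀ l : Fin n, Nat.gcd (x i) (x l) ∈ S :=
    fun l => hgcd _ (memS x S hS i) _ (memS x S hS l)
  calc ∑ l, ((Nat.gcd (x i) (x l) : ℤ)) ^ a * c l
      = ∑ l, (∑ w ∈ S.filter (· ∣ Nat.gcd (x i) (x l)), Fa w) * c l := by
        apply Finset.sum_congr rfl
        intro l _
        rw [sum_mob S hSpos _ (hgcdS l)]
    _ = ∑ w ∈ S.filter (· ∣ x i), Fa w * (∑ l ∈ Finset.univ.filter (fun l => w ∣ x l), c l) :=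
        swap_sum x S Fa c i
    _ = ∑ w ∈ S.filter (· ∣ x i), Lb w := by
        apply Finset.sum_congr rfl
        intro w hw
        have hwS : w ∈ S := (Finset.mem_filter.mp hw).1
        have := hc w hwS
        simp only [one_mul] at this
        rw [this, hFaq w hwS]
    _ = ((Nat.lcm (x i) (x j) : ℤ)) ^ b := sum_mob S hSpos _ (memS x S hS i)


/-- Column existence for `[S^a] ∣ [S^b]`. -/
lemma colC {n : ℕ} (x : Fin n → ℕ) (hinj : Function.Injective x)
    (S : Finset ℕ) (hS : S = Finset.image x Finset.univ) (hSpos : ∀ w ∈ S, 0 < w)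
    (hgcd : ∀ s ∈ S, ∀ t ∈ S, Nat.gcd s t ∈ S) (hG : CondG S)
    {a b : ℕ} (ha : 0 < a) (hb : 0 < b) (hab : a ∣ b) (j : Fin n) : ∃ c : Fin n → ℤ,
    ∀ i, ∑ l, ((Nat.lcm (x i) (x l) : ℤ)) ^ a * c l = ((Nat.lcm (x i) (x j) : ℤ)) ^ b := by
  classical
  set R := mob S (fun w => (((w : ℚ)) ^ a)⁻¹) with hR
  set ψ : ℕ → ℚ := fun w => ((Nat.lcm w (x j) : ℚ)) ^ b * (((w : ℚ)) ^ a)⁻¹ with hψ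
  have hex : ∀ w : ℕ, ∃ T : ℤ, w ∈ S → (((w : ℤ)) ^ a ∣ T ∧ mob S ψ w = R w * (T : ℚ)) := by
    intro w
    by_cases hw : w ∈ S
    · obtain ⟨T, h1, h2⟩ := mob_ratio S hSpos hgcd hG ha hb hab hw (memS x S hS j)
      exact ⟨T, fun _ => ⟨h1, h2⟩⟩
    · exact ⟨0, fun h => absurd h hw⟩
  choose T hT using hex
  obtain ⟨c, hc⟩ := solve_system x hinj S hS hSpos (fun w => ((w : ℤ)) ^ a) T
    (fun w hw => (hT w hw).1)
    (fun w _ w' _ hww' => pow_dvd_pow_of_dvd (Int.natCast_dvd_natCast.mpr hww') a)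
  refine ⟨c, fun i => ?_⟩
  have hxiS : x i ∈ S := memS x S hS i
  have hxipos : 0 < x i := hSpos _ hxiS
  have hxiq : (((x i : ℕ) : ℚ)) ^ a ≠ 0 := by positivity
  have hgcdS : ∀ l : Fin n, Nat.gcd (x i) (x l) ∈ S :=
    fun l => hgcd _ hxiS _ (memS x S hS l)
  have hQ : ∑ l, ((Nat.lcm (x i) (x l) : ℚ)) ^ a * ((c l : ℤ) : ℚ)
      = ((Nat.lcm (x i) (x j) : ℚ)) ^ b := by
    have hlcm_id : ∀ l : Fin n, ((Nat.lcm (x i) (x l) : ℚ)) ^ a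
        = (∑ w ∈ S.filter (· ∣ Nat.gcd (x i) (x l)), R w) * (((x i : ℚ)) ^ a *
            ((x l : ℚ)) ^ a) := by
      intro l
      have hgl : 0 < Nat.gcd (x i) (x l) := hSpos _ (hgcdS l)
      have hglq : ((Nat.gcd (x i) (x l) : ℚ)) ^ a ≠ 0 := by positivity
      rw [sum_mob S hSpos _ (hgcdS l)]
      have hml : ((Nat.gcd (x i) (x l) : ℚ)) * ((Nat.lcm (x i) (x l) : ℚ))
          = ((x i : ℚ)) * ((x l : ℚ)) := by
        exact_mod_cast congrArg (fun m : ℕ => (m : ℚ)) (Nat.gcd_mul_lcm (x i) (x l))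
      field_simp
      have hml' : ((Nat.lcm (x i) (x l) : ℚ)) * ((Nat.gcd (x i) (x l) : ℚ))
          = ((x i : ℚ)) * ((x l : ℚ)) := by rw [mul_comm]; exact hml
      rw [← mul_pow, ← mul_pow, hml']
    calc ∑ l, ((Nat.lcm (x i) (x l) : ℚ)) ^ a * ((c l : ℤ) : ℚ)
        = ∑ l, ((x i : ℚ)) ^ a * ((∑ w ∈ S.filter (· ∣ Nat.gcd (x i) (x l)), R w) *
            (((x l : ℚ)) ^ a * ((c l : ℤ) : ℚ))) := by
          apply Finset.sum_congr rfl
          intro l _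
          rw [hlcm_id l]; ring
      _ = ((x i : ℚ)) ^ a * ∑ l, (∑ w ∈ S.filter (· ∣ Nat.gcd (x i) (x l)), R w) *
            (((x l : ℚ)) ^ a * ((c l : ℤ) : ℚ)) := by rw [Finset.mul_sum]
      _ = ((x i : ℚ)) ^ a * ∑ w ∈ S.filter (· ∣ x i), R w *
            (∑ l ∈ Finset.univ.filter (fun l => w ∣ x l), ((x l : ℚ)) ^ a * ((c l : ℤ) : ℚ)) := by
          rw [swap_sum x S R (fun l => ((x l : ℚ)) ^ a * ((c l : ℤ) : ℚ)) i]
      _ = ((x i : ℚ)) ^ a * ∑ w ∈ S.filter (· ∣ x i), mob S ψ w := by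
          congr 1
          apply Finset.sum_congr rfl
          intro w hw
          have hwS : w ∈ S := (Finset.mem_filter.mp hw).1
          have hcw := hc w hwS
          have hcast : ∑ l ∈ Finset.univ.filter (fun l => w ∣ x l),
              ((x l : ℚ)) ^ a * ((c l : ℤ) : ℚ) = ((T w : ℤ) : ℚ) := by
            rw [← hcw]; push_cast; ring
          rw [hcast, ← (hT w hwS).2]
      _ = ((x i : ℚ)) ^ a * ψ (x i) := by rw [sum_mob S hSpos ψ hxiS]
      _ = ((Nat.lcm (x i) (x j) : ℚ)) ^ b := by
          rw [hψ]
          field_simp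
  exact_mod_cast hQ

theorem stmt_13 (a b : ℕ) (ha : 0 < a) (hb : 0 < b) (hab : a ∣ b)
    (n : ℕ) (hn : 0 < n) (x : Fin n → ℕ)
    (hinj : Function.Injective x) (hpos : ∀ i, 0 < x i)
    (S : Finset ℕ) (hS : S = Finset.image x Finset.univ)
    (hgcd : ∀ s ∈ S, ∀ t ∈ S, Nat.gcd s t ∈ S)
    (hmax : S.sup (fun s => (GTD S s).card) = 2)
    (hG : CondG S) :
    ∃ A B C : Matrix (Fin n) (Fin n) ℤ,
      (Matrix.of fun i j => ((Nat.gcd (x i) (x j) : ℤ)) ^ b) =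
        (Matrix.of fun i j => ((Nat.gcd (x i) (x j) : ℤ)) ^ a) * A ∧
      (Matrix.of fun i j => ((Nat.lcm (x i) (x j) : ℤ)) ^ b) =
        (Matrix.of fun i j => ((Nat.gcd (x i) (x j) : ℤ)) ^ a) * B ∧
      (Matrix.of fun i j => ((Nat.lcm (x i) (x j) : ℤ)) ^ b) =
        (Matrix.of fun i j => ((Nat.lcm (x i) (x j) : ℤ)) ^ a) * C := by
  classical
  have hSpos : ∀ w ∈ S, 0 < w := by
    intro w hw
    rw [hS] at hw
    obtain ⟨i, -, rfl⟩ := Finset.mem_image.mp hw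
    exact hpos i
  choose cA hcA using fun j => colA x hinj S hS hSpos hgcd hG hb hab j
  choose cB hcB using fun j => colB x hinj S hS hSpos hgcd hG hb hab j
  choose cC hcC using fun j => colC x hinj S hS hSpos hgcd hG ha hb hab j
  refine ⟨Matrix.of (fun l j => cA j l), Matrix.of (fun l j => cB j l),
    Matrix.of (fun l j => cC j l), ?_, ?_, ?_⟩
  · ext i j
    rw [Matrix.mul_apply]
    simp only [Matrix.of_apply]
    exact (hcA j i).symm
  · ext i j
    rw [Matrix.mul_apply]
    simp only [Matrix.of_apply]
    exact (hcB j i).symm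
  · ext i j
    rw [Matrix.mul_apply]
    simp only [Matrix.of_apply]
    exact (hcC j i).symm
end
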